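/- arXiv:0905.3754 — 7 statements merged into one kernel-verified Lean document; each statement's English description precedes it below -/
import Mathlib

section
/- Let I be an ideal on a cardinal κ and let θ be a regular cardinal. Then I is θ-decomposable if and only if there is a sequence ⟨A_i : i < θ⟩ of I-positive subsets of κ, pairwise equal modulo I (A_i =_I A_j for all i, j < θ), such that ⋂_{i<θ} ⋃_{i ≤ j < θ} A_j = ∅. -/
set_option autoImplicit false

open Cardinal Set Ordinal

/-- `I` is an ideal on the cardinal `κ` (identified with the set of ordinals below `κ.ord`):
a family of subsets of `κ` closed under subsets and finite unions, containing all bounded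
subsets of `κ`, and not containing `κ` itself. -/
def IsIdealOn (κ : Cardinal.{0}) (I : Set (Set Ordinal.{0})) : Prop :=
  (∀ A ∈ I, A ⊆ Iio κ.ord) ∧
  (∀ A ∈ I, ∀ B, B ⊆ A → B ∈ I) ∧
  (∀ A ∈ I, ∀ B ∈ I, A ∪ B ∈ I) ∧
  (∀ β, β < κ.ord → Iio β ∈ I) ∧
  Iio κ.ord ∉ I

/-- `A =_I B`: `A` and `B` are equal modulo the ideal `I`. -/
def EqMod (I : Set (Set Ordinal.{0})) (A B : Set Ordinal.{0}) : Prop :=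
  A \ B ∈ I ∧ B \ A ∈ I

/-- `I` is weakly `θ`-saturated: `κ` cannot be partitioned into `θ` pairwise disjoint
`I`-positive sets. -/
def WeaklySat (κ θ : Cardinal.{0}) (I : Set (Set Ordinal.{0})) : Prop :=
  ¬ ∃ P : Ordinal → Set Ordinal,
      (∀ i, i < θ.ord → P i ∉ I) ∧
      (∀ i, i < θ.ord → ∀ j, j < θ.ord → i ≠ j → Disjoint (P i) (P j)) ∧
      (⋃ i ∈ Iio θ.ord, P i) = Iio κ.ord

/-- `I` is `θ`-indecomposable. -/
def IndecIdeal (κ θ : Cardinal.{0}) (I : Set (Set Ordinal.{0})) : Prop :=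
  ∀ A : Ordinal → Set Ordinal,
    (∀ i, i < θ.ord → A i ⊆ Iio κ.ord) →
    (⋃ i ∈ Iio θ.ord, A i) ∉ I →
    ∃ w : Set Ordinal, w ⊆ Iio θ.ord ∧ #w < Cardinal.lift.{1} θ ∧
      (⋃ i ∈ w, A i) ∉ I

/-- `I` is `τ`-complete: closed under unions of fewer than `τ` of its members. -/
def IsCompleteIdeal (τ : Cardinal.{0}) (I : Set (Set Ordinal.{0})) : Prop :=
  ∀ ι, ι < τ.ord → ∀ A : Ordinal → Set Ordinal,
    (∀ i, i < ι → A i ∈ I) → (⋃ i ∈ Iio ι, A i) ∈ I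

/-- `comp I`: the degree of completeness of `I`. -/
noncomputable def compIdeal (I : Set (Set Ordinal.{0})) : Cardinal.{0} :=
  sSup {τ | IsCompleteIdeal τ I}

/-- `wsat I`: the least `θ` for which `I` is weakly `θ`-saturated. -/
noncomputable def wsatIdeal (κ : Cardinal.{0}) (I : Set (Set Ordinal.{0})) : Cardinal.{0} :=
  sInf {θ | WeaklySat κ θ I}

/-- `S*(I) = {α < κ : wsat(I) ≤ cf(α) < α and cf(α) ∈ indec(I)}`. -/
def SstarIdeal (κ : Cardinal.{0}) (I : Set (Set Ordinal.{0})) : Set Ordinal.{0} :=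
  {α | α < κ.ord ∧ wsatIdeal κ I ≤ α.cof ∧ (α.cof).ord < α ∧
    α.cof < κ ∧ IndecIdeal κ α.cof I}

/-- `f` is bounded modulo `I`. -/
def BoundedMod (κ : Cardinal.{0}) (I : Set (Set Ordinal.{0})) (f : Ordinal → Ordinal) : Prop :=
  ∃ ξ, ξ < κ.ord ∧ {α | α < κ.ord ∧ ξ < f α} ∈ I

/-- `f` is a least function modulo `I`. -/
def LeastFnMod (κ : Cardinal.{0}) (I : Set (Set Ordinal.{0})) (f : Ordinal → Ordinal) : Prop :=
  ¬ BoundedMod κ I f ∧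
  ∀ g : Ordinal → Ordinal, (∀ α, α < κ.ord → g α < κ.ord) →
    {α | α < κ.ord ∧ ¬ g α < f α} ∈ I → BoundedMod κ I g

/-- `C` is club in `δ`: a subset of `δ` unbounded in `δ` and closed under suprema of its
bounded nonempty subsets. -/
def ClubIn (C : Set Ordinal.{0}) (δ : Ordinal.{0}) : Prop :=
  C ⊆ Iio δ ∧ (∀ β, β < δ → ∃ α ∈ C, β ≤ α) ∧
  (∀ s, s ⊆ C → s.Nonempty → sSup s < δ → sSup s ∈ C)

/-- `S` is stationary in `δ`: it meets every club subset of `δ`. -/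
def StatIn (S : Set Ordinal.{0}) (δ : Ordinal.{0}) : Prop :=
  ∀ C, ClubIn C δ → (S ∩ C).Nonempty

/-- The stationary set `S` reflects at `α < κ`. -/
def Reflects (κ : Cardinal.{0}) (S : Set Ordinal.{0}) (α : Ordinal.{0}) : Prop :=
  α < κ.ord ∧ ℵ₀ < α.cof ∧ StatIn (S ∩ Iio α) α

/-- `Refl(<θ, S)` (with `S ⊆ κ`): every fewer-than-`θ` many stationary subsets of `S`
reflect simultaneously at some `α < κ`. -/
def ReflLt (κ θ : Cardinal.{0}) (S : Set Ordinal.{0}) : Prop :=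
  ∀ σ : Cardinal, σ < θ → ∀ T : Ordinal → Set Ordinal,
    (∀ i, i < σ.ord → T i ⊆ S ∧ StatIn (T i) κ.ord) →
    ∃ α, ∀ i, i < σ.ord → Reflects κ (T i) α

/-- `μ` is a singular cardinal. -/
def SingularCard (μ : Cardinal.{0}) : Prop := ℵ₀ ≤ μ ∧ ¬ μ.IsRegular

/-- The accumulation points of a set of ordinals. -/
noncomputable def accs (C : Set Ordinal.{0}) : Set Ordinal.{0} :=
  {α ∈ C | sSup (C ∩ Iio α) = α}

/-- The non-accumulation points of a set of ordinals. -/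
noncomputable def nacc (C : Set Ordinal.{0}) : Set Ordinal.{0} := C \ accs C

/-- The ideal `I_δ` on `C_δ` generated by the sets
`{γ ∈ C_δ : γ ∈ acc(C_δ) or cf(γ) < α or γ < β}` for `α < μ`, `β < δ`. -/
noncomputable def Idelta (μ : Cardinal.{0}) (Cδ : Set Ordinal.{0}) (δ : Ordinal.{0}) :
    Set (Set Ordinal.{0}) :=
  {A | A ⊆ Cδ ∧ ∃ α : Cardinal, α < μ ∧ ∃ β, β < δ ∧
    A ⊆ {γ ∈ Cδ | γ ∈ accs Cδ ∨ γ.cof < α ∨ γ < β}}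

/-- The club-guessing ideal `id_p(C̄, Ī)` on `λ = μ⁺`. -/
noncomputable def idp (μ : Cardinal.{0}) (S : Set Ordinal.{0}) (C : Ordinal → Set Ordinal) :
    Set (Set Ordinal.{0}) :=
  {A | A ⊆ Iio (Order.succ μ).ord ∧ ∃ E, ClubIn E (Order.succ μ).ord ∧
    ∀ δ ∈ S ∩ E, A ∩ E ∩ C δ ∈ Idelta μ (C δ) δ}

/-- `⟨f α : α < lam⟩` is a scale on `⟨μs n : n < ω⟩` for `lam = μ⁺`. -/
def IsScale (lam : Cardinal.{0}) (μs : ℕ → Cardinal.{0}) (f : Ordinal → ℕ → Ordinal) : Prop :=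
  (∀ α, α < lam.ord → ∀ n, f α n < (μs n).ord) ∧
  (∀ α β, α < β → β < lam.ord → ∃ N, ∀ n ≥ N, f α n < f β n) ∧
  (∀ g : ℕ → Ordinal, (∀ n, g n < (μs n).ord) →
    ∃ α, α < lam.ord ∧ ∃ N, ∀ n ≥ N, g n < f α n)

/-- The interval `I(δ, ε, m) = (c⁰_δ(ω·ε+m), c⁰_δ(ω·ε+m+1)]`. -/
def blockI (c0 : Ordinal → Ordinal → Ordinal) (δ ε : Ordinal.{0}) (m : ℕ) : Set Ordinal.{0} :=
  Ioc (c0 δ (Ordinal.omega0 * ε + (m : Ordinal))) (c0 δ (Ordinal.omega0 * ε + ((m : ℕ) + 1 : ℕ)))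

/-- `pr₁(lam, mu', kap, th)`. -/
def Pr1 (lam mu' kap th : Cardinal.{0}) : Prop :=
  ∃ c : Ordinal → Ordinal → Ordinal,
    (∀ x y, c x y = c y x) ∧
    (∀ x y, x < lam.ord → y < lam.ord → c x y < kap.ord) ∧
    ∀ t : Ordinal → Set Ordinal,
      (∀ α, α < mu'.ord → t α ⊆ Iio lam.ord ∧ #(t α) < Cardinal.lift.{1} th) →
      (∀ α, α < mu'.ord → ∀ β, β < mu'.ord → α ≠ β → Disjoint (t α) (t β)) →
      ∀ ς, ς < kap.ord → ∃ α β, α < β ∧ β < mu'.ord ∧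
        ∀ ε ∈ t α, ∀ ζ ∈ t β, c ε ζ = ς

/-- The positive square-brackets relation `lam → [mu]²_th`. -/
def SqBktArrow (lam mu th : Cardinal.{0}) : Prop :=
  ∀ F : Ordinal → Ordinal → Ordinal, (∀ x y, F x y = F y x) →
    (∀ x y, x < lam.ord → y < lam.ord → F x y < th.ord) →
    ∃ H, H ⊆ Iio lam.ord ∧ #H = Cardinal.lift.{1} mu ∧
      ∃ ς, ς < th.ord ∧ ∀ α ∈ H, ∀ β ∈ H, α < β → F α β ≠ ς

/-- The negative square-brackets relation `lam ↛ [mu]²_th`. -/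
def SqBktNeg (lam mu th : Cardinal.{0}) : Prop :=
  ∃ F : Ordinal → Ordinal → Ordinal, (∀ x y, F x y = F y x) ∧
    (∀ x y, x < lam.ord → y < lam.ord → F x y < th.ord) ∧
    ∀ H, H ⊆ Iio lam.ord → #H = Cardinal.lift.{1} mu →
      ∀ ς, ς < th.ord → ∃ α ∈ H, ∃ β ∈ H, α < β ∧ F α β = ς

/-- `U` is a uniform ultrafilter on the infinite cardinal `κ`. -/
def IsUniformUltrafilterOn (κ : Cardinal.{0}) (U : Set (Set Ordinal.{0})) : Prop :=
  (∀ A ∈ U, A ⊆ Iio κ.ord) ∧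
  (Iio κ.ord ∈ U) ∧ (∅ ∉ U) ∧
  (∀ A ∈ U, ∀ B ∈ U, A ∩ B ∈ U) ∧
  (∀ A ∈ U, ∀ B, A ⊆ B → B ⊆ Iio κ.ord → B ∈ U) ∧
  (∀ A, A ⊆ Iio κ.ord → A ∈ U ∨ (Iio κ.ord \ A) ∈ U) ∧
  (∀ A ∈ U, #A = Cardinal.lift.{1} κ)

/-- The dual ideal `{κ ∖ A : A ∈ U}` of an ultrafilter `U` on `κ`. -/
def dualIdeal (κ : Cardinal.{0}) (U : Set (Set Ordinal.{0})) : Set (Set Ordinal.{0}) :=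
  {A | ∃ B ∈ U, A = Iio κ.ord \ B}
private lemma aux_bound_stmt1 (θ : Cardinal.{0}) (hθ : θ.IsRegular) (w : Set Ordinal.{0})
    (hw : w ⊆ Iio θ.ord) (hcard : #w < Cardinal.lift.{1} θ) :
    ∃ i, i < θ.ord ∧ ∀ j ∈ w, j ≤ i := by
  have hsmall : Small.{0} w := small_subset hw
  set f : Shrink.{0} ↥w → Ordinal := fun x => ((equivShrink ↥w).symm x : Ordinal) with hf
  have hlt : ∀ x, f x < θ.ord := fun x => hw ((equivShrink ↥w).symm x).2
  have hmk : #(Shrink.{0} ↥w) < θ.ord.cof := by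
    rw [hθ.cof_eq]
    have h1 : Cardinal.lift.{1} #(Shrink.{0} ↥w) = Cardinal.lift.{0} #↥w :=
      Cardinal.lift_mk_shrink' ↥w
    rw [Cardinal.lift_id'] at h1
    rw [← h1] at hcard
    exact Cardinal.lift_lt.mp hcard
  have hsup : iSup f < θ.ord := Ordinal.iSup_lt_ord hmk hlt
  refine ⟨iSup f, hsup, fun j hj => ?_⟩
  have := Ordinal.le_iSup f (equivShrink ↥w ⟨j, hj⟩)
  simpa [hf] using this

/-- For an ideal `I` on `κ` and a regular cardinal `θ`: `I` is `θ`-decomposable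
iff there is a `θ`-sequence of `I`-positive subsets of `κ`, pairwise equal modulo `I`, with
`⋂_{i<θ} ⋃_{i ≤ j < θ} A_j = ∅`. -/
theorem stmt_1 (κ θ : Cardinal) (hθ : θ.IsRegular) (I : Set (Set Ordinal))
    (hI : IsIdealOn κ I) :
    ¬ IndecIdeal κ θ I ↔
      ∃ A : Ordinal → Set Ordinal,
        (∀ i, i < θ.ord → A i ⊆ Iio κ.ord ∧ A i ∉ I) ∧
        (∀ i, i < θ.ord → ∀ j, j < θ.ord → EqMod I (A i) (A j)) ∧
        (⋂ i ∈ Iio θ.ord, ⋃ j ∈ Ico i θ.ord, A j) = ∅ := by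
  obtain ⟨hIsub, hIdown, hIunion, hIbdd, hInotall⟩ := hI
  have hlim : Order.IsSuccLimit θ.ord := Cardinal.isSuccLimit_ord hθ.aleph0_le
  have h0 : (0 : Ordinal) < θ.ord := hlim.pos
  constructor
  · intro hdec
    rw [IndecIdeal] at hdec
    push_neg at hdec
    obtain ⟨B, hBsub, hBpos, hBsmall⟩ := hdec
    have hEmpty : ∅ ∈ I := by
      have := hBsmall ∅ (empty_subset _)
        (by rw [Cardinal.mk_emptyCollection]; exact pos_iff_ne_zero.2 (fun h => hθ.pos.ne' (Cardinal.lift_eq_zero.1 h)))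
      simpa using this
    have hIio : ∀ i, i < θ.ord → (⋃ j ∈ Iio i, B j) ∈ I := fun i hi =>
      hBsmall _ (fun j hj => lt_trans hj hi)
        (by rw [Ordinal.mk_Iio_ordinal]; exact Cardinal.lift_lt.2 (Cardinal.lt_ord.1 hi))
    have hIco : ∀ i j, j < θ.ord → (⋃ k ∈ Ico i j, B k) ∈ I := fun i j hj =>
      hBsmall _ (fun k hk => lt_trans hk.2 hj)
        (lt_of_le_of_lt (Cardinal.mk_le_mk_of_subset Set.Ico_subset_Iio_self)
          (by rw [Ordinal.mk_Iio_ordinal]; exact Cardinal.lift_lt.2 (Cardinal.lt_ord.1 hj)))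
    set C : Ordinal → Set Ordinal := fun i => B i \ ⋃ j ∈ Iio i, B j with hC
    have hCsub : ∀ i, C i ⊆ B i := fun i x hx => hx.1
    have hCU : (⋃ i ∈ Iio θ.ord, C i) = ⋃ i ∈ Iio θ.ord, B i := by
      apply Subset.antisymm
      · exact iUnion₂_mono fun i _ => hCsub i
      · intro x hx
        rw [mem_iUnion₂] at hx ⊢
        obtain ⟨i, hi, hxi⟩ := hx
        have hne : ({j | x ∈ B j} : Set Ordinal).Nonempty := ⟨i, hxi⟩
        have hmem : sInf {j | x ∈ B j} ∈ {j | x ∈ B j} := csInf_mem hne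
        have hle : sInf {j | x ∈ B j} ≤ i := csInf_le' hxi
        refine ⟨sInf {j | x ∈ B j}, lt_of_le_of_lt hle hi, hmem, ?_⟩
        intro hmem2
        rw [mem_iUnion₂] at hmem2
        obtain ⟨j, hj, hxj⟩ := hmem2
        exact absurd (csInf_le' (show j ∈ {j | x ∈ B j} from hxj)) (not_le.2 (mem_Iio.1 hj))
    set A : Ordinal → Set Ordinal := fun i => ⋃ j ∈ Ico i θ.ord, C j with hA
    have hAsub : ∀ i, A i ⊆ Iio κ.ord := by
      intro i x hx
      rw [mem_iUnion₂] at hx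
      obtain ⟨j, hj, hxj⟩ := hx
      exact hBsub j hj.2 (hCsub j hxj)
    have hmono : ∀ i j, i ≤ j → A j ⊆ A i := by
      intro i j hij x hx
      rw [mem_iUnion₂] at hx ⊢
      obtain ⟨k, hk, hxk⟩ := hx
      exact ⟨k, ⟨le_trans hij hk.1, hk.2⟩, hxk⟩
    have hApos : ∀ i, i < θ.ord → A i ∉ I := by
      intro i hi hAI
      apply hBpos
      apply hIdown _ (hIunion _ hAI _
        (hIdown _ (hIio i hi) _ (iUnion₂_mono fun j _ => hCsub j)))
      rw [← hCU]
      intro x hx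
      rw [mem_iUnion₂] at hx
      obtain ⟨k, hk, hxk⟩ := hx
      rcases lt_or_ge k i with h | h
      · exact Set.mem_union_right _ (mem_iUnion₂.2 ⟨k, h, hxk⟩)
      · exact Set.mem_union_left _ (mem_iUnion₂.2 ⟨k, ⟨h, hk⟩, hxk⟩)
    have hdiff : ∀ i j, i ≤ j → j < θ.ord → A i \ A j ∈ I := by
      intro i j hij hj
      apply hIdown _ (hIco i j hj)
      rintro x ⟨hx1, hx2⟩
      rw [mem_iUnion₂] at hx1
      obtain ⟨k, hk, hxk⟩ := hx1
      rcases lt_or_ge k j with h | h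
      · exact mem_iUnion₂.2 ⟨k, ⟨hk.1, h⟩, hCsub k hxk⟩
      · exact absurd (mem_iUnion₂.2 ⟨k, ⟨h, hk.2⟩, hxk⟩) hx2
    refine ⟨A, fun i hi => ⟨hAsub i, hApos i hi⟩, ?_, ?_⟩
    · intro i hi j hj
      rcases le_total i j with h | h
      · exact ⟨hdiff i j h hj, by
          rw [Set.diff_eq_empty.2 (hmono i j h)]; exact hEmpty⟩
      · exact ⟨by rw [Set.diff_eq_empty.2 (hmono j i h)]; exact hEmpty,
          hdiff j i h hi⟩
    · ext x
      simp only [mem_iInter, mem_empty_iff_false, iff_false, mem_Iio]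
      intro hx
      have h1 := hx 0 h0
      rw [mem_iUnion₂] at h1
      obtain ⟨j, hj, hxj⟩ := h1
      rw [mem_iUnion₂] at hxj
      obtain ⟨k, hk, hxk⟩ := hxj
      have hk1 : Order.succ k < θ.ord := hlim.succ_lt hk.2
      have h2 := hx (Order.succ k) hk1
      rw [mem_iUnion₂] at h2
      obtain ⟨j', hj', hxj'⟩ := h2
      rw [mem_iUnion₂] at hxj'
      obtain ⟨k', hk', hxk'⟩ := hxj'
      have hkk : k < k' := lt_of_lt_of_le (Order.lt_succ k) (le_trans hj'.1 hk'.1)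
      exact hxk'.2 (mem_iUnion₂.2 ⟨k, hkk, hxk.1⟩)
  · rintro ⟨A, hA, hEq, hInt⟩ hind
    have hEmpty : ∅ ∈ I := by
      have := (hEq 0 h0 0 h0).1
      simpa using this
    set B : Ordinal → Set Ordinal := fun i => A 0 \ ⋃ j ∈ Ico i θ.ord, A j with hB
    have hBsub : ∀ i, i < θ.ord → B i ⊆ Iio κ.ord := fun i _ x hx => (hA 0 h0).1 hx.1
    have hUnion : (⋃ i ∈ Iio θ.ord, B i) = A 0 := by
      apply Subset.antisymm
      · intro x hx
        rw [mem_iUnion₂] at hx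
        obtain ⟨i, _, hxi⟩ := hx
        exact hxi.1
      · intro x hx
        have hni : x ∉ ⋂ i ∈ Iio θ.ord, ⋃ j ∈ Ico i θ.ord, A j := by
          rw [hInt]; exact notMem_empty x
        rw [mem_iInter₂] at hni
        push_neg at hni
        obtain ⟨i, hi, hxi⟩ := hni
        exact mem_iUnion₂.2 ⟨i, hi, hx, hxi⟩
    obtain ⟨w, hw1, hw2, hw3⟩ := hind B hBsub (hUnion ▸ (hA 0 h0).2)
    obtain ⟨i, hiθ, hib⟩ := aux_bound_stmt1 θ hθ w hw1 hw2
    apply hw3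
    apply hIdown _ ((hEq 0 h0 i hiθ).1)
    intro x hx
    rw [mem_iUnion₂] at hx
    obtain ⟨j, hj, hxj⟩ := hx
    exact ⟨hxj.1, fun hxi => hxj.2 (mem_iUnion₂.2 ⟨i, ⟨hib j hj, hiθ⟩, hxi⟩)⟩
end

section
/- Let I be an ideal on a cardinal κ and let θ be a regular cardinal. The following are equivalent: (1) I is weakly θ-saturated and θ-indecomposable; (2) for every ⊆-increasing sequence ⟨B_i : i < θ⟩ of subsets of κ there is i* < θ such that B_i =_I ⋃_{j<θ} B_j for all i with i* ≤ i < θ; (3) for every sequence ⟨A_i : i < θ⟩ of I-positive subsets of κ, the set ⋂_{i<θ} ⋃_{i ≤ j < θ} A_j is nonempty. -/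
set_option autoImplicit false

open Cardinal Set Ordinal

lemma helper_bound {θ : Cardinal.{0}} (hθ : θ.IsRegular) {w : Set Ordinal.{0}}
    (hw : w ⊆ Iio θ.ord) (hcard : #w < Cardinal.lift.{1} θ) :
    ∃ t, t < θ.ord ∧ ∀ j ∈ w, j < t := by
  have hb : BddAbove w := ⟨θ.ord, fun x hx => (hw hx).le⟩
  have hsm : Small.{0} ↥w := Ordinal.bddAbove_iff_small.1 hb
  set f : Shrink ↥w → Ordinal := fun x => ((equivShrink ↥w).symm x).1 with hf
  have hflt : ∀ x, f x < θ.ord := fun x => hw ((equivShrink ↥w).symm x).2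
  have hcard2 : #(Shrink ↥w) < θ := by
    have h1 : Cardinal.lift.{1} #(Shrink.{0} ↥w) = Cardinal.lift.{0} #↥w :=
      Cardinal.lift_mk_shrink' ↥w
    have h2 : Cardinal.lift.{1} #(Shrink.{0} ↥w) < Cardinal.lift.{1} θ := by
      rw [h1]; simpa using hcard
    exact_mod_cast Cardinal.lift_lt.1 h2
  have hsup : iSup f < θ.ord := Cardinal.iSup_lt_ord_of_isRegular hθ hcard2 hflt
  refine ⟨iSup f + 1, ?_, ?_⟩
  · rw [Ordinal.add_one_eq_succ]
    exact (Cardinal.isSuccLimit_ord hθ.1).succ_lt hsup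
  · intro j hj
    have : j ≤ iSup f := by
      have hj' : f (equivShrink ↥w ⟨j, hj⟩) = j := by simp [hf]
      rw [← hj']
      exact le_ciSup (Ordinal.bddAbove_range _) _
    rw [Ordinal.add_one_eq_succ]
    exact this.trans_lt (Order.lt_succ _)

noncomputable def seqF (s : Ordinal.{0} → Ordinal.{0}) : Ordinal.{0} → Ordinal.{0}
  | ξ => s (sSup (Set.range fun η : Iio ξ => seqF s η.1))
termination_by ξ => ξ
decreasing_by exact η.2

lemma seqF_def (s : Ordinal → Ordinal) (ξ : Ordinal) :
    seqF s ξ = s (sSup (Set.range fun η : Iio ξ => seqF s η.1)) := by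
  rw [seqF]

lemma seqF_prop {θ : Cardinal.{0}} (hθ : θ.IsRegular) {s : Ordinal → Ordinal}
    (hs : ∀ i, i < θ.ord → i < s i ∧ s i < θ.ord) :
    ∀ ξ, ξ < θ.ord → seqF s ξ < θ.ord ∧ ∀ η, η < ξ → seqF s η < seqF s ξ := by
  intro ξ
  induction ξ using Ordinal.induction with
  | _ ξ IH =>
    intro hξ
    set w : Set Ordinal := Set.range fun η : Iio ξ => seqF s η.1 with hwdef
    have hwsub : w ⊆ Iio θ.ord := by
      rintro _ ⟨η, rfl⟩
      exact (IH η.1 η.2 (η.2.trans hξ)).1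
    have hwcard : #w < Cardinal.lift.{1} θ := by
      refine lt_of_le_of_lt Cardinal.mk_range_le ?_
      rw [Ordinal.mk_Iio_ordinal]
      exact Cardinal.lift_lt.2 (Cardinal.lt_ord.1 hξ)
    obtain ⟨t, ht, htw⟩ := helper_bound hθ hwsub hwcard
    have hM : sSup w ≤ t := csSup_le' fun b hb => (htw b hb).le
    have hMlt : sSup w < θ.ord := hM.trans_lt ht
    have heq : seqF s ξ = s (sSup w) := seqF_def s ξ
    obtain ⟨h1, h2⟩ := hs _ hMlt
    refine ⟨by rw [heq]; exact h2, fun η hη => ?_⟩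
    have hmem : seqF s η ∈ w := ⟨⟨η, hη⟩, rfl⟩
    have hb : BddAbove w := ⟨t, fun b hb => (htw b hb).le⟩
    calc seqF s η ≤ sSup w := le_csSup hb hmem
    _ < s (sSup w) := h1
    _ = seqF s ξ := heq.symm

lemma seqF_succ {θ : Cardinal.{0}} (hθ : θ.IsRegular) {s : Ordinal → Ordinal}
    (hs : ∀ i, i < θ.ord → i < s i ∧ s i < θ.ord)
    {ξ : Ordinal} (hξ : ξ < θ.ord) (hξ1 : ξ + 1 < θ.ord) :
    seqF s (ξ + 1) = s (seqF s ξ) := by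
  have heq : seqF s (ξ + 1) = s (sSup (Set.range fun η : Iio (ξ + 1) => seqF s η.1)) :=
    seqF_def s (ξ + 1)
  have key : ∀ η : ↥(Iio (ξ + 1)), seqF s η.1 ≤ seqF s ξ := by
    intro η
    have hle : η.1 ≤ ξ := by
      have h2 : η.1 < Order.succ ξ := by
        rw [← Ordinal.add_one_eq_succ]; exact η.2
      exact Order.lt_succ_iff.1 h2
    rcases eq_or_lt_of_le hle with h | h
    · exact le_of_eq (by rw [h])
    · exact ((seqF_prop hθ hs ξ hξ).2 η.1 h).le
  have hsup : sSup (Set.range fun η : Iio (ξ + 1) => seqF s η.1) = seqF s ξ := by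
    apply le_antisymm
    · apply csSup_le'
      rintro _ ⟨η, rfl⟩
      exact key η
    · have hmem : seqF s ξ ∈ Set.range fun η : Iio (ξ + 1) => seqF s η.1 :=
        ⟨⟨ξ, by rw [Set.mem_Iio, Ordinal.add_one_eq_succ]; exact Order.lt_succ ξ⟩, rfl⟩
      refine le_csSup ⟨seqF s ξ, ?_⟩ hmem
      rintro _ ⟨η, rfl⟩
      exact key η
  rw [heq, hsup]

lemma one_to_two {κ θ : Cardinal.{0}} (hθ : θ.IsRegular) {I : Set (Set Ordinal.{0})}
    (hI : IsIdealOn κ I) (hemp : ∅ ∈ I)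
    (hSat : WeaklySat κ θ I) (hInd : IndecIdeal κ θ I)
    (B : Ordinal → Set Ordinal) (hB : ∀ i, i < θ.ord → B i ⊆ Iio κ.ord)
    (hmono : ∀ i j, i ≤ j → j < θ.ord → B i ⊆ B j) :
    ∃ i', i' < θ.ord ∧ ∀ i, i' ≤ i → i < θ.ord →
      EqMod I (B i) (⋃ j ∈ Iio θ.ord, B j) := by
  obtain ⟨hIsub, hIdown, hIunion, hIbdd, hItop⟩ := hI
  have hlim : Order.IsSuccLimit θ.ord := Cardinal.isSuccLimit_ord hθ.1
  set U : Set Ordinal := ⋃ j ∈ Iio θ.ord, B j with hU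
  by_contra hcon
  push_neg at hcon
  have hBU : ∀ i, i < θ.ord → B i ⊆ U := by
    intro i hi
    exact subset_biUnion_of_mem hi
  have hpos : ∀ i, i < θ.ord → U \ B i ∉ I := by
    intro i hi
    obtain ⟨i₂, hii₂, hi₂, hne⟩ := hcon i hi
    intro hmem
    apply hne
    constructor
    · have : B i₂ \ U = ∅ := diff_eq_empty.2 (hBU i₂ hi₂)
      rw [this]; exact hemp
    · exact hIdown _ hmem _ (diff_subset_diff_right (hmono i i₂ hii₂ hi₂))
  -- Step A
  have hstep : ∀ i, i < θ.ord → ∃ t, i < t ∧ t < θ.ord ∧ B t \ B i ∉ I := by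
    intro i hi
    have hUdecomp : U \ B i = ⋃ j ∈ Iio θ.ord, (B j \ B i) := by
      ext x
      simp only [hU, mem_diff, mem_iUnion, Set.mem_Iio, exists_prop]
      tauto
    obtain ⟨w, hw1, hw2, hw3⟩ := hInd (fun j => B j \ B i)
      (fun j hj x hx => hB j hj hx.1) (by rw [← hUdecomp]; exact hpos i hi)
    obtain ⟨t, ht, htw⟩ := helper_bound hθ hw1 hw2
    have hsub : (⋃ j ∈ w, (B j \ B i)) ⊆ B t \ B i := by
      intro x hx
      simp only [mem_iUnion, exists_prop] at hx
      obtain ⟨j, hj, hxj⟩ := hx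
      exact ⟨hmono j t (htw j hj).le ht hxj.1, hxj.2⟩
    have hBt : B t \ B i ∉ I := fun hmem => hw3 (hIdown _ hmem _ hsub)
    refine ⟨t, ?_, ht, hBt⟩
    by_contra hle
    push_neg at hle
    apply hBt
    have : B t \ B i = ∅ := diff_eq_empty.2 (hmono t i hle hi)
    rw [this]; exact hemp
  have hstep' : ∀ i, ∃ t, i < θ.ord → (i < t ∧ t < θ.ord ∧ B t \ B i ∉ I) := by
    intro i
    by_cases h : i < θ.ord
    · obtain ⟨t, h1, h2, h3⟩ := hstep i h
      exact ⟨t, fun _ => ⟨h1, h2, h3⟩⟩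
    · exact ⟨0, fun hc => absurd hc h⟩
  choose s hs using hstep'
  have hs2 : ∀ i, i < θ.ord → i < s i ∧ s i < θ.ord :=
    fun i hi => ⟨(hs i hi).1, (hs i hi).2.1⟩
  set e : Ordinal → Ordinal := seqF s with he
  have helt : ∀ ξ, ξ < θ.ord → e ξ < θ.ord := fun ξ hξ => (seqF_prop hθ hs2 ξ hξ).1
  have hemonolt : ∀ η ξ, η < ξ → ξ < θ.ord → e η < e ξ :=
    fun η ξ hηξ hξ => (seqF_prop hθ hs2 ξ hξ).2 η hηξ
  have hemonole : ∀ η ξ, η ≤ ξ → ξ < θ.ord → e η ≤ e ξ := by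
    intro η ξ hηξ hξ
    rcases eq_or_lt_of_le hηξ with h | h
    · rw [h]
    · exact (hemonolt η ξ h hξ).le
  have hsucclt : ∀ ξ : Ordinal, ξ < θ.ord → ξ + 1 < θ.ord := by
    intro ξ hξ
    rw [Ordinal.add_one_eq_succ]
    exact hlim.succ_lt hξ
  have hesucc : ∀ ξ, ξ < θ.ord → e (ξ + 1) = s (e ξ) :=
    fun ξ hξ => seqF_succ hθ hs2 hξ (hsucclt ξ hξ)
  set Q : Ordinal → Set Ordinal := fun ξ => B (e (ξ + 1)) \ B (e ξ) with hQ
  have hQpos : ∀ ξ, ξ < θ.ord → Q ξ ∉ I := by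
    intro ξ hξ
    have : Q ξ = B (s (e ξ)) \ B (e ξ) := by rw [hQ]; simp only; rw [hesucc ξ hξ]
    rw [this]
    exact (hs (e ξ) (helt ξ hξ)).2.2
  have hQκ : ∀ ξ, ξ < θ.ord → Q ξ ⊆ Iio κ.ord := by
    intro ξ hξ x hx
    exact hB (e (ξ + 1)) (helt (ξ + 1) (hsucclt ξ hξ)) hx.1
  have hQdisj : ∀ η ξ, η < ξ → ξ < θ.ord → Disjoint (Q η) (Q ξ) := by
    intro η ξ hηξ hξ
    rw [Set.disjoint_left]
    intro x hxη hxξ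
    have h1 : η + 1 ≤ ξ := by
      rw [Ordinal.add_one_eq_succ]
      exact Order.succ_le_of_lt hηξ
    have h2 : e (η + 1) ≤ e ξ := hemonole _ _ h1 hξ
    exact hxξ.2 (hmono _ _ h2 (helt ξ hξ) hxη.1)
  have hθ0 : (0 : Ordinal) < θ.ord := hlim.pos
  set R : Set Ordinal := ⋃ η ∈ {η : Ordinal | η < θ.ord ∧ η ≠ 0}, Q η with hR
  set P : Ordinal → Set Ordinal := fun ξ => if ξ = 0 then Iio κ.ord \ R else Q ξ with hP
  have hP0 : P 0 = Iio κ.ord \ R := by rw [hP]; simp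
  have hPne : ∀ ξ, ξ ≠ 0 → P ξ = Q ξ := by
    intro ξ h; rw [hP]; simp [h]
  have hQR : ∀ η, η < θ.ord → η ≠ 0 → Q η ⊆ R := by
    intro η h1 h2 x hx
    rw [hR]
    exact mem_biUnion ⟨h1, h2⟩ hx
  apply hSat
  refine ⟨P, ?_, ?_, ?_⟩
  · intro ξ hξ hmem
    by_cases hξ0 : ξ = 0
    · subst hξ0
      rw [hP0] at hmem
      apply hQpos 0 hθ0
      apply hIdown _ hmem
      intro x hx
      refine ⟨hQκ 0 hθ0 hx, ?_⟩
      intro hxR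
      rw [hR] at hxR
      simp only [mem_iUnion, Set.mem_setOf_eq, exists_prop] at hxR
      obtain ⟨η, ⟨hη1, hη2⟩, hxη⟩ := hxR
      have h0η : (0 : Ordinal) < η := pos_iff_ne_zero.2 hη2
      exact Set.disjoint_left.1 (hQdisj 0 η h0η hη1) hx hxη
    · apply hQpos ξ hξ
      rwa [hPne ξ hξ0] at hmem
  · intro i hi j hj hne
    by_cases hi0 : i = 0
    · subst hi0
      have hj0 : j ≠ 0 := fun h => hne h.symm
      rw [hP0, hPne j hj0]
      rw [Set.disjoint_left]
      intro x hx hxj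
      exact hx.2 (hQR j hj hj0 hxj)
    · rw [hPne i hi0]
      by_cases hj0 : j = 0
      · subst hj0
        rw [hP0]
        rw [Set.disjoint_right]
        intro x hx hxi
        exact hx.2 (hQR i hi hi0 hxi)
      · rw [hPne j hj0]
        rcases lt_or_gt_of_ne hne with h | h
        · exact hQdisj i j h hj
        · exact (hQdisj j i h hi).symm
  · apply Set.eq_of_subset_of_subset
    · intro x hx
      simp only [mem_iUnion, Set.mem_Iio, exists_prop] at hx
      obtain ⟨ξ, hξ, hxξ⟩ := hx
      by_cases hξ0 : ξ = 0
      · subst hξ0; rw [hP0] at hxξ; exact hxξ.1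
      · rw [hPne ξ hξ0] at hxξ; exact hQκ ξ hξ hxξ
    · intro x hx
      simp only [mem_iUnion, Set.mem_Iio, exists_prop]
      by_cases hxR : x ∈ R
      · rw [hR] at hxR
        simp only [mem_iUnion, Set.mem_setOf_eq, exists_prop] at hxR
        obtain ⟨η, ⟨hη1, hη2⟩, hxη⟩ := hxR
        refine ⟨η, hη1, ?_⟩
        rw [hPne η hη2]
        exact hxη
      · refine ⟨0, hθ0, ?_⟩
        rw [hP0]
        exact ⟨hx, hxR⟩

lemma two_to_one {κ θ : Cardinal.{0}} (hθ : θ.IsRegular) {I : Set (Set Ordinal.{0})}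
    (hI : IsIdealOn κ I)
    (h2 : ∀ B : Ordinal → Set Ordinal,
        (∀ i, i < θ.ord → B i ⊆ Iio κ.ord) →
        (∀ i j, i ≤ j → j < θ.ord → B i ⊆ B j) →
        ∃ i', i' < θ.ord ∧ ∀ i, i' ≤ i → i < θ.ord →
          EqMod I (B i) (⋃ j ∈ Iio θ.ord, B j)) :
    WeaklySat κ θ I ∧ IndecIdeal κ θ I := by
  obtain ⟨hIsub, hIdown, hIunion, hIbdd, hItop⟩ := hI
  have hlim : Order.IsSuccLimit θ.ord := Cardinal.isSuccLimit_ord hθ.1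
  have hsucclt : ∀ ξ : Ordinal, ξ < θ.ord → ξ + 1 < θ.ord := by
    intro ξ hξ
    rw [Ordinal.add_one_eq_succ]
    exact hlim.succ_lt hξ
  constructor
  · rintro ⟨P, hpos, hdisj, hcover⟩
    have hPκ : ∀ j, j < θ.ord → P j ⊆ Iio κ.ord := by
      intro j hj
      rw [← hcover]
      exact subset_biUnion_of_mem hj
    set B : Ordinal → Set Ordinal := fun i => ⋃ j ∈ Iio i, P j with hB
    have hBκ : ∀ i, i < θ.ord → B i ⊆ Iio κ.ord := by
      intro i hi x hx
      simp only [hB, mem_iUnion, Set.mem_Iio, exists_prop] at hx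
      obtain ⟨j, hj, hxj⟩ := hx
      exact hPκ j (hj.trans hi) hxj
    have hBmono : ∀ i j, i ≤ j → j < θ.ord → B i ⊆ B j := by
      intro i j hij _ x hx
      simp only [hB, mem_iUnion, Set.mem_Iio, exists_prop] at hx ⊢
      obtain ⟨k, hk, hxk⟩ := hx
      exact ⟨k, hk.trans_le hij, hxk⟩
    obtain ⟨i', hi', hEq⟩ := h2 B hBκ hBmono
    obtain ⟨_, hUB⟩ := hEq i' le_rfl hi'
    apply hpos i' hi'
    apply hIdown _ hUB
    intro x hx
    constructor
    · simp only [mem_iUnion, Set.mem_Iio, exists_prop]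
      refine ⟨i' + 1, hsucclt i' hi', ?_⟩
      simp only [hB, mem_iUnion, Set.mem_Iio, exists_prop]
      refine ⟨i', ?_, hx⟩
      rw [Ordinal.add_one_eq_succ]; exact Order.lt_succ i'
    · intro hxB
      simp only [hB, mem_iUnion, Set.mem_Iio, exists_prop] at hxB
      obtain ⟨j, hj, hxj⟩ := hxB
      exact Set.disjoint_left.1 (hdisj j (hj.trans hi') i' hi' hj.ne) hxj hx
  · intro A hA hU
    set B : Ordinal → Set Ordinal := fun i => ⋃ j ∈ Iio i, A j with hB
    have hBκ : ∀ i, i < θ.ord → B i ⊆ Iio κ.ord := by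
      intro i hi x hx
      simp only [hB, mem_iUnion, Set.mem_Iio, exists_prop] at hx
      obtain ⟨j, hj, hxj⟩ := hx
      exact hA j (hj.trans hi) hxj
    have hBmono : ∀ i j, i ≤ j → j < θ.ord → B i ⊆ B j := by
      intro i j hij _ x hx
      simp only [hB, mem_iUnion, Set.mem_Iio, exists_prop] at hx ⊢
      obtain ⟨k, hk, hxk⟩ := hx
      exact ⟨k, hk.trans_le hij, hxk⟩
    have hUeq : (⋃ i ∈ Iio θ.ord, B i) = ⋃ j ∈ Iio θ.ord, A j := by
      apply Set.eq_of_subset_of_subset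
      · intro x hx
        simp only [hB, mem_iUnion, Set.mem_Iio, exists_prop] at hx ⊢
        obtain ⟨i, hi, j, hj, hxj⟩ := hx
        exact ⟨j, hj.trans hi, hxj⟩
      · intro x hx
        simp only [hB, mem_iUnion, Set.mem_Iio, exists_prop] at hx ⊢
        obtain ⟨j, hj, hxj⟩ := hx
        refine ⟨j + 1, hsucclt j hj, j, ?_, hxj⟩
        rw [Ordinal.add_one_eq_succ]; exact Order.lt_succ j
    obtain ⟨i', hi', hEq⟩ := h2 B hBκ hBmono
    obtain ⟨_, hUB⟩ := hEq i' le_rfl hi'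
    rw [hUeq] at hUB
    have hBpos : B i' ∉ I := by
      intro hmem
      apply hU
      apply hIdown _ (hIunion _ hmem _ hUB)
      intro x hx
      by_cases hxB : x ∈ B i'
      · exact Or.inl hxB
      · exact Or.inr ⟨hx, hxB⟩
    refine ⟨Iio i', fun x hx => hx.trans hi', ?_, hBpos⟩
    rw [Ordinal.mk_Iio_ordinal]
    exact Cardinal.lift_lt.2 (Cardinal.lt_ord.1 hi')

lemma two_to_three {κ θ : Cardinal.{0}} (hθ : θ.IsRegular) {I : Set (Set Ordinal.{0})}
    (hI : IsIdealOn κ I)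
    (h2 : ∀ B : Ordinal → Set Ordinal,
        (∀ i, i < θ.ord → B i ⊆ Iio κ.ord) →
        (∀ i j, i ≤ j → j < θ.ord → B i ⊆ B j) →
        ∃ i', i' < θ.ord ∧ ∀ i, i' ≤ i → i < θ.ord →
          EqMod I (B i) (⋃ j ∈ Iio θ.ord, B j)) :
    ∀ A : Ordinal → Set Ordinal,
      (∀ i, i < θ.ord → A i ⊆ Iio κ.ord) →
      (∀ i, i < θ.ord → A i ∉ I) →
      (⋂ i ∈ Iio θ.ord, ⋃ j ∈ Ico i θ.ord, A j).Nonempty := by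
  obtain ⟨hIsub, hIdown, hIunion, hIbdd, hItop⟩ := hI
  intro A hA hApos
  by_contra hne
  rw [Set.not_nonempty_iff_eq_empty, Set.eq_empty_iff_forall_notMem] at hne
  set S : Set Ordinal := ⋃ j ∈ Iio θ.ord, A j with hS
  set B : Ordinal → Set Ordinal := fun i => S \ ⋃ j ∈ Ico i θ.ord, A j with hB
  have hBκ : ∀ i, i < θ.ord → B i ⊆ Iio κ.ord := by
    intro i hi x hx
    obtain ⟨hxS, _⟩ := hx
    simp only [hS, mem_iUnion, Set.mem_Iio, exists_prop] at hxS
    obtain ⟨j, hj, hxj⟩ := hxS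
    exact hA j hj hxj
  have hBmono : ∀ i j, i ≤ j → j < θ.ord → B i ⊆ B j := by
    intro i j hij _ x hx
    refine ⟨hx.1, fun hmem => hx.2 ?_⟩
    simp only [mem_iUnion, Set.mem_Ico, exists_prop] at hmem ⊢
    obtain ⟨k, ⟨hk1, hk2⟩, hxk⟩ := hmem
    exact ⟨k, ⟨hij.trans hk1, hk2⟩, hxk⟩
  have hUeq : (⋃ i ∈ Iio θ.ord, B i) = S := by
    apply Set.eq_of_subset_of_subset
    · intro x hx
      simp only [mem_iUnion, Set.mem_Iio, exists_prop] at hx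
      obtain ⟨i, hi, hxi⟩ := hx
      exact hxi.1
    · intro x hxS
      have := hne x
      simp only [Set.mem_iInter, mem_iUnion, Set.mem_Iio, Set.mem_Ico, exists_prop,
        not_forall, not_exists] at this
      obtain ⟨i, hi, hni⟩ := this
      simp only [mem_iUnion, Set.mem_Iio, exists_prop]
      refine ⟨i, hi, hxS, ?_⟩
      intro hmem
      simp only [mem_iUnion, Set.mem_Ico, exists_prop] at hmem
      obtain ⟨j, hj, hxj⟩ := hmem
      exact hni j ⟨hj, hxj⟩
  obtain ⟨i', hi', hEq⟩ := h2 B hBκ hBmono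
  obtain ⟨_, hUB⟩ := hEq i' le_rfl hi'
  rw [hUeq] at hUB
  apply hApos i' hi'
  apply hIdown _ hUB
  intro x hx
  have hxS : x ∈ S := by
    simp only [hS, mem_iUnion, Set.mem_Iio, exists_prop]
    exact ⟨i', hi', hx⟩
  refine ⟨hxS, fun hxB => hxB.2 ?_⟩
  simp only [mem_iUnion, Set.mem_Ico, exists_prop]
  exact ⟨i', ⟨le_rfl, hi'⟩, hx⟩

lemma three_to_one {κ θ : Cardinal.{0}} (hθ : θ.IsRegular) {I : Set (Set Ordinal.{0})}
    (hI : IsIdealOn κ I)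
    (h3 : ∀ A : Ordinal → Set Ordinal,
        (∀ i, i < θ.ord → A i ⊆ Iio κ.ord) →
        (∀ i, i < θ.ord → A i ∉ I) →
        (⋂ i ∈ Iio θ.ord, ⋃ j ∈ Ico i θ.ord, A j).Nonempty) :
    WeaklySat κ θ I ∧ IndecIdeal κ θ I := by
  obtain ⟨hIsub, hIdown, hIunion, hIbdd, hItop⟩ := hI
  have hlim : Order.IsSuccLimit θ.ord := Cardinal.isSuccLimit_ord hθ.1
  have hθ0 : (0 : Ordinal) < θ.ord := hlim.pos
  have hsucclt : ∀ ξ : Ordinal, ξ < θ.ord → ξ + 1 < θ.ord := by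
    intro ξ hξ
    rw [Ordinal.add_one_eq_succ]
    exact hlim.succ_lt hξ
  constructor
  · rintro ⟨P, hpos, hdisj, hcover⟩
    have hPκ : ∀ j, j < θ.ord → P j ⊆ Iio κ.ord := by
      intro j hj
      rw [← hcover]
      exact subset_biUnion_of_mem hj
    obtain ⟨x, hx⟩ := h3 P hPκ hpos
    rw [Set.mem_iInter₂] at hx
    have h0 := hx 0 hθ0
    simp only [mem_iUnion, Set.mem_Ico, exists_prop] at h0
    obtain ⟨j0, ⟨_, hj0⟩, hxj0⟩ := h0
    have h1 := hx (j0 + 1) (hsucclt j0 hj0)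
    simp only [mem_iUnion, Set.mem_Ico, exists_prop] at h1
    obtain ⟨j1, ⟨hj1a, hj1b⟩, hxj1⟩ := h1
    have hlt : j0 < j1 := by
      have : j0 < j0 + 1 := by
        rw [Ordinal.add_one_eq_succ]; exact Order.lt_succ j0
      exact this.trans_le hj1a
    exact Set.disjoint_left.1 (hdisj j0 hj0 j1 hj1b hlt.ne) hxj0 hxj1
  · intro A hA hU
    by_contra hcon
    push_neg at hcon
    have hInit : ∀ i, i < θ.ord → (⋃ j ∈ Iio i, A j) ∈ I := by
      intro i hi
      apply hcon (Iio i) (fun x hx => hx.trans hi)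
      rw [Ordinal.mk_Iio_ordinal]
      exact Cardinal.lift_lt.2 (Cardinal.lt_ord.1 hi)
    set S : Set Ordinal := ⋃ j ∈ Iio θ.ord, A j with hS
    set A' : Ordinal → Set Ordinal := fun i => S \ ⋃ j ∈ Iio i, A j with hA'
    have hA'κ : ∀ i, i < θ.ord → A' i ⊆ Iio κ.ord := by
      intro i hi x hx
      obtain ⟨hxS, _⟩ := hx
      simp only [hS, mem_iUnion, Set.mem_Iio, exists_prop] at hxS
      obtain ⟨j, hj, hxj⟩ := hxS
      exact hA j hj hxj
    have hA'pos : ∀ i, i < θ.ord → A' i ∉ I := by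
      intro i hi hmem
      apply hU
      apply hIdown _ (hIunion _ (hInit i hi) _ hmem)
      intro x hx
      by_cases hxB : x ∈ ⋃ j ∈ Iio i, A j
      · exact Or.inl hxB
      · exact Or.inr ⟨hx, hxB⟩
    obtain ⟨x, hx⟩ := h3 A' hA'κ hA'pos
    rw [Set.mem_iInter₂] at hx
    have h0 := hx 0 hθ0
    simp only [mem_iUnion, Set.mem_Ico, exists_prop] at h0
    obtain ⟨j0, ⟨_, hj0⟩, hxj0⟩ := h0
    have hxS : x ∈ S := hxj0.1
    have hxk : ∃ k, k < θ.ord ∧ x ∈ A k := by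
      simp only [hS, mem_iUnion, Set.mem_Iio, exists_prop] at hxS
      exact hxS
    obtain ⟨k, hk, hxAk⟩ := hxk
    have h1 := hx (k + 1) (hsucclt k hk)
    simp only [mem_iUnion, Set.mem_Ico, exists_prop] at h1
    obtain ⟨j1, ⟨hj1a, hj1b⟩, hxj1⟩ := h1
    apply hxj1.2
    simp only [mem_iUnion, Set.mem_Iio, exists_prop]
    refine ⟨k, ?_, hxAk⟩
    have : k < k + 1 := by
      rw [Ordinal.add_one_eq_succ]; exact Order.lt_succ k
    exact this.trans_le hj1a

lemma degen_notone {κ θ : Cardinal.{0}} (hθ : θ.IsRegular) {I : Set (Set Ordinal.{0})}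
    (hI : IsIdealOn κ I) (hemp : ∅ ∉ I) :
    ¬ (WeaklySat κ θ I ∧ IndecIdeal κ θ I) := by
  obtain ⟨hIsub, hIdown, hIunion, hIbdd, hItop⟩ := hI
  have hθ0 : (0 : Ordinal) < θ.ord := (Cardinal.isSuccLimit_ord hθ.1).pos
  rintro ⟨hSat, _⟩
  apply hSat
  set P : Ordinal → Set Ordinal := fun i => if i = 0 then Iio κ.ord else ∅ with hP
  have hP0 : P 0 = Iio κ.ord := by rw [hP]; simp
  have hPne : ∀ i, i ≠ 0 → P i = ∅ := by intro i h; rw [hP]; simp [h]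
  refine ⟨P, ?_, ?_, ?_⟩
  · intro i _
    by_cases h : i = 0
    · subst h; rw [hP0]; exact hItop
    · rw [hPne i h]; exact hemp
  · intro i _ j _ hne
    by_cases h : i = 0
    · have : j ≠ 0 := fun hj => hne (h.trans hj.symm)
      rw [hPne j this]
      exact Set.disjoint_empty _
    · rw [hPne i h]
      exact Set.empty_disjoint _
  · apply Set.eq_of_subset_of_subset
    · intro x hx
      simp only [mem_iUnion, Set.mem_Iio, exists_prop] at hx
      obtain ⟨i, _, hxi⟩ := hx
      by_cases h : i = 0
      · subst h; rwa [hP0] at hxi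
      · rw [hPne i h] at hxi; exact absurd hxi (Set.notMem_empty x)
    · intro x hx
      simp only [mem_iUnion, Set.mem_Iio, exists_prop]
      exact ⟨0, hθ0, by rwa [hP0]⟩

lemma degen_nottwo {κ θ : Cardinal.{0}} (hθ : θ.IsRegular) {I : Set (Set Ordinal.{0})}
    (hemp : ∅ ∉ I) :
    ¬ (∀ B : Ordinal → Set Ordinal,
        (∀ i, i < θ.ord → B i ⊆ Iio κ.ord) →
        (∀ i j, i ≤ j → j < θ.ord → B i ⊆ B j) →
        ∃ i', i' < θ.ord ∧ ∀ i, i' ≤ i → i < θ.ord →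
          EqMod I (B i) (⋃ j ∈ Iio θ.ord, B j)) := by
  intro h2
  obtain ⟨i', hi', hEq⟩ := h2 (fun _ => ∅) (fun _ _ => Set.empty_subset _)
    (fun _ _ _ _ => subset_rfl)
  have := (hEq i' le_rfl hi').1
  rw [Set.empty_diff] at this
  exact hemp this

lemma degen_notthree {κ θ : Cardinal.{0}} (hθ : θ.IsRegular) {I : Set (Set Ordinal.{0})}
    (hemp : ∅ ∉ I) :
    ¬ (∀ A : Ordinal → Set Ordinal,
        (∀ i, i < θ.ord → A i ⊆ Iio κ.ord) →
        (∀ i, i < θ.ord → A i ∉ I) →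
        (⋂ i ∈ Iio θ.ord, ⋃ j ∈ Ico i θ.ord, A j).Nonempty) := by
  intro h3
  have hθ0 : (0 : Ordinal) < θ.ord := (Cardinal.isSuccLimit_ord hθ.1).pos
  obtain ⟨x, hx⟩ := h3 (fun _ => ∅) (fun _ _ => Set.empty_subset _) (fun _ _ => hemp)
  rw [Set.mem_iInter₂] at hx
  have := hx 0 hθ0
  simp only [mem_iUnion, Set.mem_Ico, exists_prop] at this
  obtain ⟨j, _, hxj⟩ := this
  exact Set.notMem_empty x hxj

/-- For an ideal `I` on `κ` and a regular cardinal `θ`, the following are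
equivalent: (1) `I` is weakly `θ`-saturated and `θ`-indecomposable; (2) every `⊆`-increasing
`θ`-sequence `⟨B_i⟩` of subsets of `κ` satisfies `B_i =_I ⋃_j B_j` from some `i*` on;
(3) every `θ`-sequence of `I`-positive subsets of `κ` has `⋂_{i<θ} ⋃_{i≤j<θ} A_j ≠ ∅`. -/
theorem stmt_2 (κ θ : Cardinal) (hθ : θ.IsRegular) (I : Set (Set Ordinal))
    (hI : IsIdealOn κ I) :
    ((WeaklySat κ θ I ∧ IndecIdeal κ θ I) ↔
      (∀ B : Ordinal → Set Ordinal,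
        (∀ i, i < θ.ord → B i ⊆ Iio κ.ord) →
        (∀ i j, i ≤ j → j < θ.ord → B i ⊆ B j) →
        ∃ i', i' < θ.ord ∧ ∀ i, i' ≤ i → i < θ.ord →
          EqMod I (B i) (⋃ j ∈ Iio θ.ord, B j))) ∧
    ((WeaklySat κ θ I ∧ IndecIdeal κ θ I) ↔
      (∀ A : Ordinal → Set Ordinal,
        (∀ i, i < θ.ord → A i ⊆ Iio κ.ord) →
        (∀ i, i < θ.ord → A i ∉ I) →
        (⋂ i ∈ Iio θ.ord, ⋃ j ∈ Ico i θ.ord, A j).Nonempty)) := by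
  by_cases hemp : ∅ ∈ I
  · constructor
    · constructor
      · intro h1 B hB hm
        exact one_to_two hθ hI hemp h1.1 h1.2 B hB hm
      · intro h2
        exact two_to_one hθ hI h2
    · constructor
      · intro h1
        exact two_to_three hθ hI (fun B hB hm => one_to_two hθ hI hemp h1.1 h1.2 B hB hm)
      · intro h3
        exact three_to_one hθ hI h3
  · constructor
    · exact iff_of_false (degen_notone hθ hI hemp) (degen_nottwo hθ hemp)
    · exact iff_of_false (degen_notone hθ hI hemp) (degen_notthree hθ hemp)
end

section
/- Let I be an ideal on a cardinal κ and let θ < κ be a regular cardinal. The following are equivalent: (1) I is weakly θ-saturated and θ-indecomposable; (2) whenever ⟨S_α : α < κ⟩ is a sequence of sets of ordinals with |S_α| < θ for all α, every sequence ⟨h_i : i < θ⟩ of functions in ∏_{α<κ} S_α that is pointwise ≤-increasing (i < j implies h_i(α) ≤ h_j(α) for all α < κ) is eventually constant modulo I, i.e. there is i* < θ such that for all i* ≤ i < θ, h_i(α) = h_{i*}(α) for I-almost all α < κ. -/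
set_option autoImplicit false

open Cardinal Set Ordinal

private theorem bddAux {θ : Cardinal.{0}} (hreg : θ.IsRegular) (w : Set Ordinal.{0})
    (hw : w ⊆ Iio θ.ord) (hcard : #w < Cardinal.lift.{1} θ) :
    ∃ b, b < θ.ord ∧ ∀ x ∈ w, x ≤ b := by
  obtain ⟨c, hc, hlift⟩ := Cardinal.lt_lift_iff.1 hcard
  have he : Nonempty (c.out ≃ ↥w) := by
    rw [← Cardinal.lift_mk_eq', Cardinal.mk_out, Cardinal.lift_id', hlift]
  obtain ⟨e⟩ := he
  have hsup : (⨆ x : c.out, ((e x : Ordinal.{0}))) < θ.ord := by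
    refine Ordinal.iSup_lt_ord ?_ fun i => hw (e i).2
    rw [Cardinal.mk_out, hreg.cof_eq]
    exact hc
  refine ⟨_, hsup, fun x hx => ?_⟩
  have h1 := Ordinal.le_iSup (fun x : c.out => ((e x : Ordinal.{0}))) (e.symm ⟨x, hx⟩)
  simpa using h1

private theorem stabAux {κ θ : Cardinal.{0}} (hreg : θ.IsRegular)
    (Sa : Ordinal → Set Ordinal)
    (hSa : ∀ α, α < κ.ord → #(Sa α) < Cardinal.lift.{1} θ)
    (h : Ordinal → Ordinal → Ordinal)
    (hmem : ∀ i, i < θ.ord → ∀ α, α < κ.ord → h i α ∈ Sa α)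
    (hmono : ∀ i j, i ≤ j → j < θ.ord → ∀ α, α < κ.ord → h i α ≤ h j α)
    (α : Ordinal) (hα : α < κ.ord) :
    ∃ s, s < θ.ord ∧ ∀ j, s ≤ j → j < θ.ord → h j α = h s α := by
  have h0 : (0 : Ordinal) < θ.ord := by
    rw [Cardinal.lt_ord, Ordinal.card_zero]
    exact aleph0_pos.trans_le hreg.aleph0_le
  set m : Ordinal → Ordinal := fun v => sInf {i | i < θ.ord ∧ h i α = v} with hm
  have hmθ : ∀ v, m v < θ.ord := by
    intro v
    by_cases hne : {i | i < θ.ord ∧ h i α = v}.Nonempty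
    · exact (csInf_mem hne).1
    · rw [Set.not_nonempty_iff_eq_empty] at hne
      show sInf {i | i < θ.ord ∧ h i α = v} < θ.ord
      rw [hne, Ordinal.sInf_empty]
      exact h0
  obtain ⟨b, hb, hub⟩ := bddAux hreg (m '' Sa α) (by rintro x ⟨v, _, rfl⟩; exact hmθ v)
    (Cardinal.mk_image_le.trans_lt (hSa α hα))
  refine ⟨b, hb, fun j hbj hj => ?_⟩
  have hv : h j α ∈ Sa α := hmem j hj α hα
  have hne : {i | i < θ.ord ∧ h i α = h j α}.Nonempty := ⟨j, hj, rfl⟩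
  have hmmem := csInf_mem hne
  have hmb : m (h j α) ≤ b := hub _ ⟨_, hv, rfl⟩
  have h1 : h (m (h j α)) α ≤ h b α := hmono _ b hmb hb α hα
  have h2 : h b α ≤ h j α := hmono b j hbj hj α hα
  have h3 : h (m (h j α)) α = h j α := hmmem.2
  exact le_antisymm (by rw [← h3]; exact h1) h2

private noncomputable def FbAux (next : Ordinal.{0} → Ordinal.{0}) (ξ : Ordinal.{0}) : Ordinal.{0} :=
  next (sInf {b | ∀ ζ, ∀ _ : ζ < ξ, FbAux next ζ ≤ b})
termination_by ξ
decreasing_by assumption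

private theorem FbAux_eq (next : Ordinal.{0} → Ordinal.{0}) (ξ : Ordinal.{0}) :
    FbAux next ξ = next (sInf {b | ∀ ζ, ∀ _ : ζ < ξ, FbAux next ζ ≤ b}) := by
  rw [FbAux]

/-- For an ideal `I` on `κ` and a regular `θ < κ`: `I` is weakly `θ`-saturated
and `θ`-indecomposable iff for every sequence `⟨S_α : α < κ⟩` of sets of ordinals with
`|S_α| < θ`, every pointwise `≤`-increasing `θ`-sequence of functions in `∏_{α<κ} S_α` is
eventually constant modulo `I`. -/
theorem stmt_4 (κ θ : Cardinal) (hθκ : θ < κ) (hθ : θ.IsRegular)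
    (I : Set (Set Ordinal)) (hI : IsIdealOn κ I) :
    (WeaklySat κ θ I ∧ IndecIdeal κ θ I) ↔
      (∀ Sa : Ordinal → Set Ordinal,
        (∀ α, α < κ.ord → #(Sa α) < Cardinal.lift.{1} θ) →
        ∀ h : Ordinal → Ordinal → Ordinal,
          (∀ i, i < θ.ord → ∀ α, α < κ.ord → h i α ∈ Sa α) →
          (∀ i j, i < j → j < θ.ord → ∀ α, α < κ.ord → h i α ≤ h j α) →
          ∃ i', i' < θ.ord ∧ ∀ i, i' ≤ i → i < θ.ord →
            {α | α < κ.ord ∧ h i α ≠ h i' α} ∈ I) := by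
  obtain ⟨hIsub, hIdown, hIunion, hIbdd, hItop⟩ := hI
  have hlim : Order.IsSuccLimit θ.ord := Cardinal.isSuccLimit_ord hθ.aleph0_le
  have h0 : (0 : Ordinal) < θ.ord := hlim.pos
  have hsucc : ∀ i : Ordinal, i < θ.ord → i + 1 < θ.ord := by
    intro i hi
    rw [Ordinal.add_one_eq_succ]
    exact hlim.succ_lt hi
  have hlt1 : ∀ i : Ordinal, i < i + 1 := by
    intro i
    rw [Ordinal.add_one_eq_succ]
    exact Order.lt_succ i
  constructor
  · rintro ⟨hws, hind⟩ Sa hSa h hmem hmono'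
    have hmono : ∀ i j, i ≤ j → j < θ.ord → ∀ α, α < κ.ord → h i α ≤ h j α := by
      intro i j hij hj α hα
      rcases hij.lt_or_eq with hlt | rfl
      · exact hmono' i j hlt hj α hα
      · exact le_rfl
    set E : Ordinal → Set Ordinal :=
      fun i => {α | α < κ.ord ∧ ∃ j, i ≤ j ∧ j < θ.ord ∧ h j α ≠ h i α} with hEdef
    have hEsub : ∀ i, E i ⊆ Iio κ.ord := fun i α hα => hα.1
    have hEdec : ∀ i j, i ≤ j → E j ⊆ E i := by
      intro i j hij α hα
      obtain ⟨hακ, k, hjk, hkθ, hne⟩ := hα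
      refine ⟨hακ, ?_⟩
      by_cases hji : h j α = h i α
      · exact ⟨k, hij.trans hjk, hkθ, fun hc => hne (hc.trans hji.symm)⟩
      · exact ⟨j, hij, hjk.trans_lt hkθ, hji⟩
    have hnotE : ∀ α, α < κ.ord → ∃ s, s < θ.ord ∧ α ∉ E s := by
      intro α hα
      obtain ⟨s, hs, hst⟩ := stabAux hθ Sa hSa h hmem hmono α hα
      refine ⟨s, hs, fun hc => ?_⟩
      obtain ⟨_, j, h1, h2, h3⟩ := hc
      exact h3 (hst j h1 h2)
    suffices hS : ∃ i', i' < θ.ord ∧ E i' ∈ I by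
      obtain ⟨i', hi', hEI⟩ := hS
      refine ⟨i', hi', fun i hii hi => hIdown _ hEI _ ?_⟩
      rintro α ⟨hακ, hne⟩
      exact ⟨hακ, i, hii, hi, hne⟩
    by_contra hcon
    push_neg at hcon
    have hstep : ∀ i, i < θ.ord → {j | i < j ∧ j < θ.ord ∧ (E i \ E j) ∉ I}.Nonempty := by
      intro i hi
      have hU : (⋃ j ∈ Iio θ.ord, (E i \ E j)) = E i := by
        apply Set.Subset.antisymm
        · intro α hα
          simp only [Set.mem_iUnion] at hα
          obtain ⟨j, hj, hαj⟩ := hα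
          exact hαj.1
        · intro α hα
          obtain ⟨s, hs, hns⟩ := hnotE α (hEsub i hα)
          exact Set.mem_biUnion hs ⟨hα, hns⟩
      obtain ⟨w, hwsub, hwcard, hwpos⟩ :=
        hind (fun j => E i \ E j) (fun j _ => Set.diff_subset.trans (hEsub i))
          (by rw [hU]; exact hcon i hi)
      obtain ⟨b, hbθ, hub⟩ := bddAux hθ w hwsub hwcard
      refine ⟨max b (i + 1), (hlt1 i).trans_le (le_max_right _ _),
        max_lt hbθ (hsucc i hi), fun hmem' => ?_⟩
      apply hwpos
      apply hIdown _ hmem'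
      intro α hα
      simp only [Set.mem_iUnion] at hα
      obtain ⟨j, hjw, hαj⟩ := hα
      exact ⟨hαj.1, fun hc =>
        hαj.2 (hEdec j _ ((hub j hjw).trans (le_max_left _ _)) hc)⟩
    set next : Ordinal → Ordinal := fun i => sInf {j | i < j ∧ j < θ.ord ∧ (E i \ E j) ∉ I}
      with hnextdef
    have hnext : ∀ i, i < θ.ord → i < next i ∧ next i < θ.ord ∧ (E i \ E (next i)) ∉ I :=
      fun i hi => csInf_mem (hstep i hi)
    set F : Ordinal → Ordinal := FbAux next with hFdef
    set bp : Ordinal → Ordinal := fun ξ => sInf {b | ∀ ζ, ∀ _ : ζ < ξ, F ζ ≤ b} with hbpdef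
    have hFeq : ∀ ξ, F ξ = next (bp ξ) := fun ξ => FbAux_eq next ξ
    have hbub : ∀ ξ ζ, ζ < ξ → F ζ ≤ bp ξ := by
      intro ξ
      have hne : {b | ∀ ζ, ∀ _ : ζ < ξ, F ζ ≤ b}.Nonempty := by
        obtain ⟨B, hB⟩ := Ordinal.bddAbove_of_small (s := F '' Iio ξ)
        exact ⟨B, fun ζ hζ => hB (Set.mem_image_of_mem F hζ)⟩
      exact csInf_mem hne
    have hkey : ∀ ξ, ξ < θ.ord → bp ξ < θ.ord ∧ F ξ < θ.ord ∧ (E (bp ξ) \ E (F ξ)) ∉ I := by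
      intro ξ
      induction ξ using Ordinal.induction with
      | h ξ ih =>
        intro hξ
        have hsub : F '' Iio ξ ⊆ Iio θ.ord := by
          rintro x ⟨ζ, hζ, rfl⟩
          exact (ih ζ hζ (hζ.trans hξ)).2.1
        have hcard : #(F '' Iio ξ) < Cardinal.lift.{1} θ := by
          refine Cardinal.mk_image_le.trans_lt ?_
          rw [Ordinal.mk_Iio_ordinal]
          exact Cardinal.lift_lt.2 (Cardinal.lt_ord.1 hξ)
        obtain ⟨b, hbθ, hub⟩ := bddAux hθ (F '' Iio ξ) hsub hcard
        have hbp : bp ξ ≤ b :=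
          csInf_le' (show ∀ ζ, ∀ _ : ζ < ξ, F ζ ≤ b from
            fun ζ hζ => hub _ (Set.mem_image_of_mem F hζ))
        have hbpθ : bp ξ < θ.ord := hbp.trans_lt hbθ
        obtain ⟨h1, h2, h3⟩ := hnext (bp ξ) hbpθ
        exact ⟨hbpθ, by rw [hFeq ξ]; exact h2, by rw [hFeq ξ]; exact h3⟩
    set G : Ordinal → Set Ordinal := fun ξ => E (bp ξ) \ E (F ξ) with hGdef
    have hGsub : ∀ ξ, G ξ ⊆ Iio κ.ord := fun ξ => Set.diff_subset.trans (hEsub _)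
    have hGdisj : ∀ ξ ζ, ξ < ζ → ∀ α, α ∈ G ξ → α ∉ G ζ := by
      intro ξ ζ hξζ α hαξ hαζ
      exact hαξ.2 (hEdec (F ξ) (bp ζ) (hbub ζ ξ hξζ) hαζ.1)
    apply hws
    refine ⟨fun ξ => if ξ = 0 then Iio κ.ord \ ⋃ ζ ∈ {ζ : Ordinal | ζ < θ.ord ∧ ζ ≠ 0}, G ζ
      else G ξ, ?_, ?_, ?_⟩
    · intro ξ hξ
      by_cases hξ0 : ξ = 0
      · subst hξ0
        simp only [if_pos rfl]
        intro hmem'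
        apply (hkey 0 h0).2.2
        apply hIdown _ hmem'
        intro α hα
        refine ⟨hGsub 0 hα, ?_⟩
        intro hc
        simp only [Set.mem_iUnion] at hc
        obtain ⟨ζ, ⟨hζθ, hζ0⟩, hαζ⟩ := hc
        exact hGdisj 0 ζ (pos_iff_ne_zero.2 hζ0) α hα hαζ
      · simp only [if_neg hξ0]
        exact (hkey ξ hξ).2.2
    · intro i hi j hj hij
      rw [Set.disjoint_left]
      intro α hαi hαj
      by_cases hi0 : i = 0
      · subst hi0
        have hj0 : j ≠ 0 := fun hc => hij hc.symm
        simp only [if_pos rfl] at hαi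
        simp only [if_neg hj0] at hαj
        exact hαi.2 (Set.mem_biUnion ⟨hj, hj0⟩ hαj)
      · simp only [if_neg hi0] at hαi
        by_cases hj0 : j = 0
        · subst hj0
          simp only [if_pos rfl] at hαj
          exact hαj.2 (Set.mem_biUnion ⟨hi, hi0⟩ hαi)
        · simp only [if_neg hj0] at hαj
          rcases hij.lt_or_gt with hlt | hlt
          · exact hGdisj i j hlt α hαi hαj
          · exact hGdisj j i hlt α hαj hαi
    · apply Set.Subset.antisymm
      · intro α hα
        simp only [Set.mem_iUnion] at hα
        obtain ⟨ξ, hξ, hαξ⟩ := hα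
        by_cases hξ0 : ξ = 0
        · subst hξ0
          simp only [if_pos rfl] at hαξ
          exact hαξ.1
        · simp only [if_neg hξ0] at hαξ
          exact hGsub ξ hαξ
      · intro α hα
        by_cases hc : α ∈ ⋃ ζ ∈ {ζ : Ordinal | ζ < θ.ord ∧ ζ ≠ 0}, G ζ
        · simp only [Set.mem_iUnion] at hc
          obtain ⟨ζ, ⟨hζθ, hζ0⟩, hαζ⟩ := hc
          refine Set.mem_biUnion hζθ ?_
          simp only [if_neg hζ0]
          exact hαζ
        · refine Set.mem_biUnion (show (0:Ordinal) ∈ Iio θ.ord from h0) ?_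
          simp only [if_pos rfl]
          exact ⟨hα, hc⟩
  · intro h2
    constructor
    · rintro ⟨P, hpos, hdisj, huni⟩
      set e : Ordinal → Ordinal := fun α => sInf {j | j < θ.ord ∧ α ∈ P j} with hedef
      have he : ∀ α, α < κ.ord → e α < θ.ord ∧ α ∈ P (e α) := by
        intro α hα
        have hα' : α ∈ ⋃ i ∈ Iio θ.ord, P i := by rw [huni]; exact hα
        simp only [Set.mem_iUnion] at hα'
        obtain ⟨j, hj, hαj⟩ := hα'
        exact csInf_mem (s := {j | j < θ.ord ∧ α ∈ P j}) ⟨j, hj, hαj⟩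
      have heθ : ∀ α, α < κ.ord → e α < θ.ord := fun α hα => (he α hα).1
      obtain ⟨i', hi', hconst⟩ := h2 (fun α => Iic (e α))
        (by
          intro α hα
          show #(Iic (e α)) < Cardinal.lift.{1} θ
          rw [show Iic (e α) = Iio (e α + 1) by rw [Ordinal.add_one_eq_succ, Order.Iio_succ],
            Ordinal.mk_Iio_ordinal]
          exact Cardinal.lift_lt.2 (Cardinal.lt_ord.1 (hsucc _ (heθ α hα))))
        (fun i α => min i (e α))
        (fun i _ α _ => min_le_right i (e α))
        (fun i j hij _ α _ => min_le_min hij.le le_rfl)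
      have hD := hconst (i' + 1) (hlt1 i').le (hsucc i' hi')
      apply hpos (i' + 1) (hsucc i' hi')
      apply hIdown _ hD
      intro α hα
      have hακ : α < κ.ord := by
        have : α ∈ ⋃ i ∈ Iio θ.ord, P i := Set.mem_biUnion (hsucc i' hi') hα
        rwa [huni] at this
      obtain ⟨heα, hePα⟩ := he α hακ
      have hele : e α ≤ i' + 1 := csInf_le' ⟨hsucc i' hi', hα⟩
      have heeq : e α = i' + 1 := by
        by_contra hne
        exact Set.disjoint_left.1 (hdisj _ heα _ (hsucc i' hi') hne) hePα hα
      refine ⟨hακ, ?_⟩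
      show min (i' + 1) (e α) ≠ min i' (e α)
      rw [heeq, min_self, min_eq_left (hlt1 i').le]
      exact (hlt1 i').ne'
    · intro A hA hU
      by_contra hcon
      push_neg at hcon
      set e : Ordinal → Ordinal := fun α => sInf {j | j < θ.ord ∧ α ∈ A j} with hedef
      have heθ : ∀ α, e α < θ.ord := by
        intro α
        by_cases hne : {j | j < θ.ord ∧ α ∈ A j}.Nonempty
        · exact (csInf_mem hne).1
        · rw [Set.not_nonempty_iff_eq_empty] at hne
          show sInf {j | j < θ.ord ∧ α ∈ A j} < θ.ord
          rw [hne, Ordinal.sInf_empty]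
          exact h0
      obtain ⟨i', hi', hconst⟩ := h2 (fun α => Iic (e α))
        (by
          intro α _
          show #(Iic (e α)) < Cardinal.lift.{1} θ
          rw [show Iic (e α) = Iio (e α + 1) by rw [Ordinal.add_one_eq_succ, Order.Iio_succ],
            Ordinal.mk_Iio_ordinal]
          exact Cardinal.lift_lt.2 (Cardinal.lt_ord.1 (hsucc _ (heθ α))))
        (fun i α => min i (e α))
        (fun i _ α _ => min_le_right i (e α))
        (fun i j hij _ α _ => min_le_min hij.le le_rfl)
      have hD := hconst (i' + 1) (hlt1 i').le (hsucc i' hi')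
      have hB : (⋃ k ∈ Iio (i' + 1), A k) ∈ I := by
        apply hcon
        · intro x hx
          exact hx.trans (hsucc i' hi')
        · rw [Ordinal.mk_Iio_ordinal]
          exact Cardinal.lift_lt.2 (Cardinal.lt_ord.1 (hsucc i' hi'))
      apply hU
      apply hIdown _ (hIunion _ hB _ hD)
      intro α hα
      simp only [Set.mem_iUnion] at hα
      obtain ⟨j, hj, hαj⟩ := hα
      have hne : {j | j < θ.ord ∧ α ∈ A j}.Nonempty := ⟨j, hj, hαj⟩
      obtain ⟨heα, hαe⟩ := csInf_mem hne
      by_cases hle : e α ≤ i'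
      · left
        exact Set.mem_biUnion (hle.trans_lt (hlt1 i')) hαe
      · right
        push_neg at hle
        have hακ : α < κ.ord := hA j hj hαj
        refine ⟨hακ, ?_⟩
        show min (i' + 1) (e α) ≠ min i' (e α)
        have h1 : i' + 1 ≤ e α := by
          rw [Ordinal.add_one_eq_succ]
          exact Order.succ_le_of_lt hle
        rw [min_eq_left h1, min_eq_left ((hlt1 i').le.trans h1)]
        exact (hlt1 i').ne'
end

section
/- Let I be an ideal on a cardinal κ and let θ < κ be a regular cardinal. The following are equivalent: (1) I is weakly θ-saturated and θ-indecomposable; (2) every function f : κ → θ is bounded below θ almost everywhere, i.e. there is an ordinal β < θ such that f(α) < β for I-almost all α < κ. -/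
set_option autoImplicit false

open Cardinal Set Ordinal

/-- Auxiliary: a subset of `θ.ord` of cardinality `< θ` (for `θ` regular) is bounded. -/
lemma aux_bound_stmt5 {θ : Cardinal.{0}} (hθ : θ.IsRegular) {w : Set Ordinal.{0}}
    (hw : w ⊆ Iio θ.ord) (hcard : #w < Cardinal.lift.{1} θ) :
    ∃ b, b < θ.ord ∧ ∀ x ∈ w, x ≤ b := by
  have hsmall : Small.{0} ↥w := small_subset hw
  let F : Shrink.{0} ↥w → Ordinal := fun x => ((equivShrink ↥w).symm x : Ordinal)
  have hcard' : #(Shrink.{0} ↥w) < θ := by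
    have hsh : Cardinal.lift.{1} #(Shrink.{0} ↥w) = #↥w := Cardinal.lift_mk_shrink'' ↥w
    rw [← Cardinal.lift_lt.{0, 1}, hsh]
    exact hcard
  have hF : ∀ x, F x < θ.ord := fun x => hw ((equivShrink ↥w).symm x).2
  have hsup : iSup F < θ.ord := Cardinal.iSup_lt_ord_of_isRegular hθ hcard' hF
  refine ⟨iSup F, hsup, fun x hx => ?_⟩
  have hxF : x = F (equivShrink ↥w ⟨x, hx⟩) := by simp [F]
  rw [hxF]
  exact le_ciSup (Ordinal.bddAbove_range F) _

/-- Auxiliary: iterate `g` transfinitely, taking suprema at limits. -/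
noncomputable def iterSeq (g : Ordinal.{0} → Ordinal.{0}) (i : Ordinal.{0}) : Ordinal.{0} :=
  Ordinal.limitRecOn i 0 (fun _ ih => g ih) (fun o _ ih => Ordinal.bsup o ih)

lemma iterSeq_zero (g : Ordinal.{0} → Ordinal.{0}) : iterSeq g 0 = 0 := by
  rw [iterSeq, Ordinal.limitRecOn_zero]

lemma iterSeq_succ (g : Ordinal.{0} → Ordinal.{0}) (i : Ordinal.{0}) :
    iterSeq g (Order.succ i) = g (iterSeq g i) := by
  rw [iterSeq, Ordinal.limitRecOn_succ]
  rfl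

lemma iterSeq_limit (g : Ordinal.{0} → Ordinal.{0}) {i : Ordinal.{0}} (h : Order.IsSuccLimit i) :
    iterSeq g i = Ordinal.bsup i (fun j _ => iterSeq g j) := by
  rw [iterSeq, Ordinal.limitRecOn_limit _ _ _ _ h]
  rfl

lemma iterSeq_strictMono {g : Ordinal.{0} → Ordinal.{0}} (hgt : ∀ b, b < g b) :
    StrictMono (iterSeq g) := by
  have key : ∀ i, ∀ j < i, iterSeq g j < iterSeq g i := by
    intro i
    induction i using Ordinal.limitRecOn with
    | zero => exact fun j hj => absurd hj (zero_le (a := j)).not_gt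
    | add_one i ih =>
        intro j hj
        rw [← Order.succ_eq_add_one] at hj ⊢
        rw [iterSeq_succ]
        rcases (Order.lt_succ_iff.mp hj).lt_or_eq with h | h
        · exact (ih j h).trans (hgt _)
        · rw [h]; exact hgt _
    | limit i hlim ih =>
        intro j hj
        rw [iterSeq_limit g hlim]
        exact lt_of_lt_of_le (by rw [iterSeq_succ]; exact hgt _)
          (Ordinal.le_bsup _ (Order.succ j) (hlim.succ_lt hj))
  exact fun j i h => key i j h

/-- For an ideal `I` on `κ` and a regular `θ < κ`: `I` is weakly `θ`-saturated
and `θ`-indecomposable iff every function `f : κ → θ` is bounded below `θ` almost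
everywhere. -/
theorem stmt_5 (κ θ : Cardinal) (hθκ : θ < κ) (hθ : θ.IsRegular)
    (I : Set (Set Ordinal)) (hI : IsIdealOn κ I) :
    (WeaklySat κ θ I ∧ IndecIdeal κ θ I) ↔
      (∀ f : Ordinal → Ordinal, (∀ α, α < κ.ord → f α < θ.ord) →
        ∃ β, β < θ.ord ∧ {α | α < κ.ord ∧ ¬ f α < β} ∈ I) := by
  classical
  obtain ⟨hIsub, hIdown, hIun, hIbdd, hItop⟩ := hI
  have hθord : Order.IsSuccLimit θ.ord := Cardinal.isSuccLimit_ord hθ.1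
  constructor
  · rintro ⟨hW, hInd⟩ f hf
    by_contra hcon
    push_neg at hcon
    have step1 : ∀ b, b < θ.ord → ∃ s, b < s ∧ s < θ.ord ∧
        {α | α < κ.ord ∧ b ≤ f α ∧ f α < s} ∉ I := by
      intro b hb
      have hB : {α | α < κ.ord ∧ b ≤ f α} ∉ I := hcon b hb
      have hUnion : (⋃ γ ∈ Iio θ.ord, {α | α < κ.ord ∧ b ≤ f α ∧ f α = γ}) =
          {α | α < κ.ord ∧ b ≤ f α} := by
        ext α
        simp only [mem_iUnion, mem_setOf_eq, mem_Iio, exists_prop]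
        constructor
        · rintro ⟨γ, hγ, hα, hbf, rfl⟩
          exact ⟨hα, hbf⟩
        · rintro ⟨hα, hbf⟩
          exact ⟨f α, hf α hα, hα, hbf, rfl⟩
      obtain ⟨w, hw1, hw2, hw3⟩ :=
        hInd (fun γ => {α | α < κ.ord ∧ b ≤ f α ∧ f α = γ})
          (fun γ _ α hα => hα.1) (by rw [hUnion]; exact hB)
      obtain ⟨b', hb'θ, hb'⟩ := aux_bound_stmt5 hθ hw1 hw2
      refine ⟨max (Order.succ b') (Order.succ b), lt_max_iff.2 (Or.inr (Order.lt_succ b)),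
        max_lt (hθord.succ_lt hb'θ) (hθord.succ_lt hb), ?_⟩
      intro hmem
      refine hw3 (hIdown _ hmem _ ?_)
      intro α hα
      simp only [mem_iUnion, exists_prop] at hα
      obtain ⟨γ, hγw, hακ, hbf, hfγ⟩ := hα
      exact ⟨hακ, hbf, lt_max_iff.2 (Or.inl (Order.lt_succ_iff.2 (hfγ ▸ hb' γ hγw)))⟩
    have hgex : ∀ b, ∃ s, b < s ∧ (b < θ.ord → s < θ.ord ∧
        {α | α < κ.ord ∧ b ≤ f α ∧ f α < s} ∉ I) := by
      intro b
      by_cases hb : b < θ.ord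
      · obtain ⟨s, h1, h2, h3⟩ := step1 b hb
        exact ⟨s, h1, fun _ => ⟨h2, h3⟩⟩
      · exact ⟨Order.succ b, Order.lt_succ b, fun h => absurd h hb⟩
    choose g hg1 hg2 using hgex
    have hmono : StrictMono (iterSeq g) := iterSeq_strictMono hg1
    have hβlt : ∀ i, i < θ.ord → iterSeq g i < θ.ord := by
      intro i
      induction i using Ordinal.limitRecOn with
      | zero => intro _; rw [iterSeq_zero]; exact hθord.pos
      | add_one i ih =>
          intro hi
          rw [← Order.succ_eq_add_one] at hi ⊢
          rw [iterSeq_succ]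
          exact (hg2 _ (ih ((Order.lt_succ i).trans hi))).1
      | limit i hlim ih =>
          intro hi
          rw [iterSeq_limit g hlim]
          exact Cardinal.bsup_lt_ord_of_isRegular hθ (Cardinal.lt_ord.1 hi)
            (fun j hj => ih j hj (hj.trans hi))
    have hcover : ∀ ξ, ξ < θ.ord →
        ∃ i, i < θ.ord ∧ iterSeq g i ≤ ξ ∧ ξ < iterSeq g (Order.succ i) := by
      intro ξ hξ
      have hne : {j | ξ < iterSeq g j}.Nonempty :=
        ⟨Order.succ ξ, lt_of_lt_of_le (Order.lt_succ ξ) hmono.le_apply⟩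
      have hmem : ξ < iterSeq g (sInf {j | ξ < iterSeq g j}) := csInf_mem hne
      have hmin : ∀ j, j < sInf {j | ξ < iterSeq g j} → iterSeq g j ≤ ξ := fun j hj =>
        not_lt.1 (fun hc => hj.not_ge (csInf_le (OrderBot.bddBelow _) hc))
      rcases Ordinal.zero_or_succ_or_isSuccLimit (sInf {j | ξ < iterSeq g j}) with h0 | ⟨i', hsucc⟩ | hlim
      · rw [h0, iterSeq_zero] at hmem
        exact absurd hmem (zero_le (a := ξ)).not_gt
      · have hle : iterSeq g i' ≤ ξ := hmin i' (hsucc ▸ Order.lt_succ i')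
        exact ⟨i', lt_of_le_of_lt (le_trans hmono.le_apply hle) hξ, hle, hsucc ▸ hmem⟩
      · exfalso
        rw [iterSeq_limit g hlim] at hmem
        obtain ⟨j, hj, hjlt⟩ := (Ordinal.lt_bsup _).1 hmem
        exact (hmin j hj).not_gt hjlt
    refine hW ⟨fun i => {α | α < κ.ord ∧ iterSeq g i ≤ f α ∧ f α < iterSeq g (Order.succ i)},
      ?_, ?_, ?_⟩
    · intro i hi
      have hpos := (hg2 (iterSeq g i) (hβlt i hi)).2
      rw [show g (iterSeq g i) = iterSeq g (Order.succ i) from (iterSeq_succ g i).symm] at hpos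
      exact hpos
    · intro i hi j hj hij
      rw [Set.disjoint_left]
      rintro α ⟨hκ1, hle1, hlt1⟩ ⟨hκ2, hle2, hlt2⟩
      rcases hij.lt_or_gt with h | h
      · exact absurd hle2 (not_le.2 (hlt1.trans_le (hmono.monotone (Order.succ_le_of_lt h))))
      · exact absurd hle1 (not_le.2 (hlt2.trans_le (hmono.monotone (Order.succ_le_of_lt h))))
    · ext α
      simp only [mem_iUnion, mem_setOf_eq, mem_Iio, exists_prop]
      constructor
      · rintro ⟨i, _, hκα, _⟩
        exact hκα
      · intro hκα
        obtain ⟨i, hiθ, h1, h2⟩ := hcover (f α) (hf α hκα)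
        exact ⟨i, hiθ, hκα, h1, h2⟩
  · intro hbd
    constructor
    · rintro ⟨P, hpos, hdisj, hcov⟩
      set f : Ordinal → Ordinal :=
        fun α => if h : ∃ i, i < θ.ord ∧ α ∈ P i then h.choose else 0 with hfdef
      have hfspec : ∀ α, α < κ.ord → f α < θ.ord ∧ α ∈ P (f α) := by
        intro α hα
        have hmem : α ∈ ⋃ i ∈ Iio θ.ord, P i := by rw [hcov]; exact hα
        simp only [mem_iUnion, mem_Iio, exists_prop] at hmem
        have hex : ∃ i, i < θ.ord ∧ α ∈ P i := hmem
        simp only [hfdef, dif_pos hex]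
        exact ⟨hex.choose_spec.1, hex.choose_spec.2⟩
      obtain ⟨b, hbθ, hbI⟩ := hbd f (fun α hα => (hfspec α hα).1)
      apply hpos b hbθ
      apply hIdown _ hbI _
      intro α hα
      have hκα : α < κ.ord := by
        have hmem : α ∈ ⋃ i ∈ Iio θ.ord, P i := mem_biUnion hbθ hα
        rw [hcov] at hmem
        exact hmem
      have hfb : f α = b := by
        by_contra hne
        exact (Set.disjoint_left.1 (hdisj _ (hfspec α hκα).1 _ hbθ hne) (hfspec α hκα).2) hα
      exact ⟨hκα, by rw [hfb]; exact lt_irrefl b⟩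
    · intro A hA hU
      set f : Ordinal → Ordinal :=
        fun α => if _ : ∃ i, i < θ.ord ∧ α ∈ A i then sInf {i | i < θ.ord ∧ α ∈ A i} else 0
        with hfdef
      have hfθ : ∀ α, α < κ.ord → f α < θ.ord := by
        intro α hα
        by_cases h : ∃ i, i < θ.ord ∧ α ∈ A i
        · simp only [hfdef, dif_pos h]
          exact (csInf_mem (s := {i | i < θ.ord ∧ α ∈ A i}) h).1
        · simp only [hfdef, dif_neg h]
          exact hθord.pos
      obtain ⟨b, hbθ, hbI⟩ := hbd f hfθ
      refine ⟨Iio b, fun x hx => lt_trans hx hbθ, ?_, ?_⟩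
      · rw [Ordinal.mk_Iio_ordinal]
        exact Cardinal.lift_lt.2 (Cardinal.lt_ord.1 hbθ)
      · intro hmem
        apply hU
        apply hIdown _ (hIun _ hmem _ hbI) _
        intro α hα
        simp only [mem_iUnion, mem_Iio, exists_prop] at hα
        obtain ⟨i, hiθ, hαA⟩ := hα
        have hκα : α < κ.ord := hA i hiθ hαA
        by_cases hfb : f α < b
        · have hex : ∃ j, j < θ.ord ∧ α ∈ A j := ⟨i, hiθ, hαA⟩
          have hfα : f α ∈ {j | j < θ.ord ∧ α ∈ A j} := by
            simp only [hfdef, dif_pos hex]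
            exact csInf_mem (s := {j | j < θ.ord ∧ α ∈ A j}) hex
          exact Or.inl (mem_biUnion hfb hfα.2)
        · exact Or.inr ⟨hκα, hfb⟩
end

section
/- Let I be an ideal on a cardinal κ that is weakly θ-saturated and θ-indecomposable for some regular cardinal θ < κ. Then for every ordinal δ of cofinality θ, every function f : κ → δ is bounded below δ almost everywhere: there is β < δ such that f(α) < β for I-almost all α < κ. -/
set_option autoImplicit false

open Cardinal Set Ordinal

lemma aux_bdd {o : Ordinal.{0}} {w : Set Ordinal.{0}} (hw : w ⊆ Set.Iio o)
    (hcard : #w < Cardinal.lift.{1} o.cof) : ∃ j, j < o ∧ ∀ i ∈ w, i ≤ j := by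
  classical
  set e := Ordinal.ToType.mk (o := o) with he
  let ι := {x : o.ToType // ((e.symm x : Set.Iio o) : Ordinal) ∈ w}
  have hequiv : ι ≃ ↥w :=
    { toFun := fun x => ⟨((e.symm x.1 : Set.Iio o) : Ordinal), x.2⟩
      invFun := fun y => ⟨e ⟨y.1, hw y.2⟩, by simp⟩
      left_inv := fun x => by apply Subtype.ext; simp
      right_inv := fun y => by apply Subtype.ext; simp }
  have hmk : Cardinal.lift.{1} #ι = #↥w := by
    rw [← Cardinal.lift_uzero #↥w]
    exact Cardinal.lift_mk_eq'.mpr ⟨hequiv⟩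
  have hι : #ι < o.cof := by
    have h2 := hcard
    rw [← hmk] at h2
    exact Cardinal.lift_lt.mp h2
  have hsup : (⨆ x : ι, ((e.symm x.1 : Set.Iio o) : Ordinal)) < o :=
    Ordinal.iSup_lt_ord hι fun x => (e.symm x.1).2
  refine ⟨_, hsup, fun i hi => ?_⟩
  have hmem : ((e.symm (e ⟨i, hw hi⟩) : Set.Iio o) : Ordinal) ∈ w := by simpa using hi
  have hle := le_ciSup (Ordinal.bddAbove_range
    (fun x : ι => ((e.symm x.1 : Set.Iio o) : Ordinal))) (⟨e ⟨i, hw hi⟩, hmem⟩ : ι)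
  simpa using hle

/-- If `I` is an ideal on `κ` that is weakly `θ`-saturated and
`θ`-indecomposable for some regular `θ < κ`, then for every ordinal `δ` of cofinality `θ`,
every function `f : κ → δ` is bounded below `δ` almost everywhere. -/
theorem stmt_6 (κ θ : Cardinal) (hθκ : θ < κ) (hθ : θ.IsRegular)
    (I : Set (Set Ordinal)) (hI : IsIdealOn κ I)
    (hws : WeaklySat κ θ I) (hind : IndecIdeal κ θ I) :
    ∀ δ : Ordinal, δ.cof = θ →
      ∀ f : Ordinal → Ordinal, (∀ α, α < κ.ord → f α < δ) →
        ∃ β, β < δ ∧ {α | α < κ.ord ∧ ¬ f α < β} ∈ I := by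
  obtain ⟨hIsub, hIdown, hIunion, hIbdd, hIproper⟩ := hI
  intro δ hδ f hf
  subst hδ
  by_contra hcon
  push_neg at hcon
  have hθ0 : ℵ₀ ≤ δ.cof := hθ.1
  have hlim : Order.IsSuccLimit δ := Ordinal.aleph0_le_cof.mp hθ0
  obtain ⟨g, hg⟩ := Ordinal.exists_blsub_cof δ
  classical
  -- Key lemma: every positive set has a positive piece on which f is bounded below δ
  have L1 : ∀ S : Set Ordinal, S ⊆ Set.Iio κ.ord → S ∉ I →
      ∃ β, β < δ ∧ {α | α ∈ S ∧ f α < β} ∉ I := by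
    intro S hSsub hSpos
    set A : Ordinal → Set Ordinal := fun i =>
      if h : i < (δ.cof).ord then {α | α ∈ S ∧ f α < g i h + 1} else ∅ with hA
    have hAmem : ∀ i (hi : i < (δ.cof).ord) α,
        α ∈ A i ↔ (α ∈ S ∧ f α < g i hi + 1) := by
      intro i hi α
      simp only [hA, dif_pos hi, Set.mem_setOf_eq]
    have hAsub : ∀ i, i < (δ.cof).ord → A i ⊆ Set.Iio κ.ord := by
      intro i hi α hα
      exact hSsub ((hAmem i hi α).mp hα).1
    have hUnion : (⋃ i ∈ Set.Iio (δ.cof).ord, A i) = S := by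
      apply Set.Subset.antisymm
      · intro α hα
        obtain ⟨i, hi, hαi⟩ := Set.mem_iUnion₂.mp hα
        exact ((hAmem i hi α).mp hαi).1
      · intro α hα
        have hfα : f α < δ := hf α (hSsub hα)
        rw [← hg] at hfα
        obtain ⟨i, hi, hle⟩ := Ordinal.lt_blsub_iff.mp hfα
        exact Set.mem_iUnion₂.mpr ⟨i, hi, (hAmem i hi α).mpr ⟨hα, hle.trans_lt (lt_add_one _)⟩⟩
    have hpos : (⋃ i ∈ Set.Iio (δ.cof).ord, A i) ∉ I := by rw [hUnion]; exact hSpos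
    obtain ⟨w, hw1, hw2, hw3⟩ := hind A hAsub hpos
    set w' : Set Ordinal := (fun i => if h : i < (δ.cof).ord then g i h + 1 else 0) '' w with hw'
    have hw'sub : w' ⊆ Set.Iio δ := by
      rintro _ ⟨i, hiw, rfl⟩
      have hi : i < (δ.cof).ord := hw1 hiw
      simp only [dif_pos hi]
      have hgi : g i hi < δ := by rw [← hg]; exact Ordinal.lt_blsub _ i hi
      rw [Set.mem_Iio, Ordinal.add_one_eq_succ]
      exact hlim.succ_lt hgi
    have hw'card : #↥w' < Cardinal.lift.{1} δ.cof :=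
      lt_of_le_of_lt Cardinal.mk_image_le hw2
    obtain ⟨j, hjδ, hjbd⟩ := aux_bdd hw'sub hw'card
    refine ⟨j + 1, by rw [Ordinal.add_one_eq_succ]; exact hlim.succ_lt hjδ, ?_⟩
    intro hmem
    apply hw3
    apply hIdown _ hmem
    intro α hα
    obtain ⟨i, hiw, hαi⟩ := Set.mem_iUnion₂.mp hα
    have hi : i < (δ.cof).ord := hw1 hiw
    obtain ⟨hαS, hαlt⟩ := (hAmem i hi α).mp hαi
    refine ⟨hαS, ?_⟩
    have hgj : g i hi + 1 ≤ j := by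
      have : (if h : i < (δ.cof).ord then g i h + 1 else 0) ∈ w' := ⟨i, hiw, rfl⟩
      have := hjbd _ this
      rwa [dif_pos hi] at this
    exact lt_of_lt_of_le (hαlt.trans_le hgj) (le_of_lt (lt_add_one j))
  -- from L1 and the contradiction hypothesis, build the "next" function
  have next_ex : ∀ ξ, ξ < δ → ∃ β, ξ < β ∧ β < δ ∧
      {α | α < κ.ord ∧ ξ ≤ f α ∧ f α < β} ∉ I := by
    intro ξ hξ
    have hS : {α | α < κ.ord ∧ ξ ≤ f α} ∉ I := hcon ξ hξ
    obtain ⟨β, hβδ, hβ⟩ := L1 _ (fun α hα => hα.1) hS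
    refine ⟨max β (ξ + 1), lt_of_lt_of_le (lt_add_one ξ) (le_max_right _ _),
      max_lt hβδ (by rw [Ordinal.add_one_eq_succ]; exact hlim.succ_lt hξ), ?_⟩
    intro hmem
    apply hβ
    apply hIdown _ hmem
    rintro α ⟨⟨hακ, hξα⟩, hαβ⟩
    exact ⟨hακ, hξα, hαβ.trans_le (le_max_left _ _)⟩
  let nxt : Ordinal → Ordinal := fun ξ =>
    if h : ξ < δ then Classical.choose (next_ex ξ h) else 0
  have nxt_spec : ∀ ξ (h : ξ < δ), ξ < nxt ξ ∧ nxt ξ < δ ∧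
      {α | α < κ.ord ∧ ξ ≤ f α ∧ f α < nxt ξ} ∉ I := by
    intro ξ h
    simp only [nxt, dif_pos h]
    exact Classical.choose_spec (next_ex ξ h)
  let b : Ordinal → Ordinal :=
    Ordinal.lt_wf.fix (fun i ih => nxt (Ordinal.bsup i ih))
  have hb : ∀ i, b i = nxt (Ordinal.bsup i (fun j _ => b j)) := fun i =>
    Ordinal.lt_wf.fix_eq _ i
  set s : Ordinal → Ordinal := fun i => Ordinal.bsup i (fun j _ => b j) with hs
  have hsδ : ∀ i, i < (δ.cof).ord → s i < δ := by
    intro i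
    induction i using Ordinal.induction with
    | h i IH =>
      intro hi
      apply Ordinal.bsup_lt_ord (Cardinal.lt_ord.mp hi)
      intro j hj
      have hjθ : j < (δ.cof).ord := hj.trans hi
      rw [hb j]
      exact (nxt_spec (s j) (IH j hj hjθ)).2.1
  have hsb : ∀ i, i < (δ.cof).ord → s i < b i := fun i hi => by
    rw [hb i]; exact (nxt_spec _ (hsδ i hi)).1
  set T : Ordinal → Set Ordinal :=
    fun i => {α | α < κ.ord ∧ s i ≤ f α ∧ f α < b i} with hT
  have hTpos : ∀ i, i < (δ.cof).ord → T i ∉ I := by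
    intro i hi
    have h2 := (nxt_spec (s i) (hsδ i hi)).2.2
    rw [← hb i] at h2
    exact h2
  have hTsub : ∀ i, T i ⊆ Set.Iio κ.ord := fun i α hα => hα.1
  have hTdisj : ∀ i j, i < j → Disjoint (T i) (T j) := by
    intro i j hij
    rw [Set.disjoint_left]
    rintro α ⟨hκ1, hs1, hb1⟩ ⟨hκ2, hs2, hb2⟩
    have hbs : b i ≤ s j := Ordinal.le_bsup (fun k _ => b k) i hij
    exact absurd (hb1.trans_le (hbs.trans hs2)) (lt_irrefl _)
  have hTdisj' : ∀ i, i < (δ.cof).ord → ∀ j, j < (δ.cof).ord → i ≠ j →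
      Disjoint (T i) (T j) := by
    intro i _ j _ hij
    rcases lt_or_gt_of_ne hij with h | h
    · exact hTdisj i j h
    · exact (hTdisj j i h).symm
  have h0θ : (0 : Ordinal) < (δ.cof).ord := by
    rw [Cardinal.lt_ord, Ordinal.card_zero]
    exact lt_of_lt_of_le Cardinal.aleph0_pos hθ0
  set R : Set Ordinal := Set.Iio κ.ord \ ⋃ i ∈ Set.Iio (δ.cof).ord, T i with hR
  set P : Ordinal → Set Ordinal := fun i => if i = 0 then T 0 ∪ R else T i with hP
  apply hws
  have hTR : ∀ k, k < (δ.cof).ord → Disjoint R (T k) := by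
    intro k hk
    rw [Set.disjoint_left]
    rintro α ⟨hκα, hnot⟩ hTk
    exact hnot (Set.mem_biUnion hk hTk)
  refine ⟨P, ?_, ?_, ?_⟩
  · intro i hi
    simp only [hP]
    split_ifs with h
    · subst h
      intro hmem
      exact hTpos 0 h0θ (hIdown _ hmem _ Set.subset_union_left)
    · exact hTpos i hi
  · intro i hi j hj hij
    simp only [hP]
    by_cases h1 : i = 0
    · by_cases h2 : j = 0
      · exact absurd (h1.trans h2.symm) hij
      · subst h1
        rw [if_pos rfl, if_neg h2]
        exact Set.disjoint_union_left.mpr ⟨hTdisj' 0 h0θ j hj hij, hTR j hj⟩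
    · by_cases h2 : j = 0
      · subst h2
        rw [if_neg h1, if_pos rfl]
        exact (Set.disjoint_union_left.mpr ⟨hTdisj' 0 h0θ i hi (Ne.symm hij), hTR i hi⟩).symm
      · rw [if_neg h1, if_neg h2]
        exact hTdisj' i hi j hj hij
  · apply Set.Subset.antisymm
    · intro α hα
      obtain ⟨i, hi, hαi⟩ := Set.mem_iUnion₂.mp hα
      simp only [hP] at hαi
      split_ifs at hαi with h
      · rcases hαi with h' | h'
        · exact h'.1
        · exact h'.1
      · exact hαi.1
    · intro α hα
      by_cases hαT : α ∈ ⋃ i ∈ Set.Iio (δ.cof).ord, T i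
      · obtain ⟨i, hi, hαi⟩ := Set.mem_iUnion₂.mp hαT
        refine Set.mem_biUnion hi ?_
        simp only [hP]
        split_ifs with h
        · exact Or.inl (h ▸ hαi)
        · exact hαi
      · refine Set.mem_biUnion (Set.mem_Iio.mpr h0θ) ?_
        simp only [hP, if_pos rfl]
        exact Or.inr ⟨hα, hαT⟩
end

section
/- Assume the following setup: λ = μ⁺ where μ is a singular cardinal of cofinality ℵ₀; σ is a regular cardinal with ℵ₀ < σ < μ; S is a stationary subset of {δ < λ : cf(δ) = σ}; ⟨C_δ : δ ∈ S⟩ is a family with each C_δ club in δ. For δ ∈ S, let I_δ be the ideal on C_δ generated by the sets {γ ∈ C_δ : γ ∈ acc(C_δ) or cf(γ) < α or γ < β} for α < μ and β < δ, and let id_p(C̄,Ī) = {A ⊆ λ : there is a club E ⊆ λ such that A ∩ E ∩ C_δ ∈ I_δ for all δ ∈ S ∩ E}. Then id_p(C̄,Ī) is τ-indecomposable for every uncountable regular cardinal τ < μ with τ ≠ σ. -/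
set_option autoImplicit false

open Cardinal Set Ordinal

/-- Pigeonhole: a cover of an unbounded subset of `τ.ord` by fewer than `τ` sets
(`τ` regular) has an unbounded piece. -/
lemma unb_of_cover {τc : Cardinal.{0}} (hτ : τc.IsRegular) {ι : Type} (hι : #ι < τc)
    (F : ι → Set Ordinal.{0}) (U : Set Ordinal) (hUsub : U ⊆ Iio τc.ord)
    (hU : ∀ β < τc.ord, ∃ j ∈ U, β ≤ j)
    (hcov : ∀ j ∈ U, ∃ i, j ∈ F i) :
    ∃ i, ∀ β < τc.ord, ∃ j ∈ F i ∩ U, β ≤ j := by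
  by_contra h
  push_neg at h
  choose b hb1 hb2 using h
  have hsup : (⨆ i, b i) < τc.ord := Ordinal.iSup_lt_ord (by rwa [hτ.cof_eq]) hb1
  obtain ⟨j, hjU, hj⟩ := hU _ hsup
  obtain ⟨i, hiF⟩ := hcov j hjU
  have h1 : j < b i := hb2 i j ⟨hiF, hjU⟩
  have h2 : b i ≤ ⨆ i, b i := le_ciSup (Ordinal.bddAbove_range b) i
  exact absurd ((h1.trans_le h2).trans_le hj) (lt_irrefl j)

/-- The intersection of fewer than `cof Λ` clubs in `Λ` is a club in `Λ`. -/
lemma clubIn_iInter {Λ τo : Ordinal.{0}} (hτΛ : τo.card < Λ.cof)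
    (hΛ : ℵ₀ < Λ.cof) (hτo : 0 < τo) (E : Ordinal → Set Ordinal)
    (hE : ∀ i < τo, ClubIn (E i) Λ) :
    ClubIn (⋂ i ∈ Iio τo, E i) Λ := by
  have hΛlim : Order.IsSuccLimit Λ := Ordinal.aleph0_le_cof.1 hΛ.le
  refine ⟨?_, ?_, ?_⟩
  · intro x hx
    exact (hE 0 hτo).1 (Set.mem_iInter₂.1 hx 0 hτo)
  · -- unboundedness
    intro β hβ
    have key : ∀ i γ, ∃ α, α < Λ ∧ (i < τo → γ < Λ → α ∈ E i ∧ γ < α) := by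
      intro i γ
      by_cases h : i < τo ∧ γ < Λ
      · obtain ⟨α, hα1, hα2⟩ := (hE i h.1).2.1 (γ + 1) (hΛlim.succ_lt h.2)
        exact ⟨α, (hE i h.1).1 hα1, fun _ _ =>
          ⟨hα1, lt_of_lt_of_le (lt_of_lt_of_le (lt_add_one γ) le_rfl) hα2⟩⟩
      · exact ⟨0, hΛlim.pos, fun h1 h2 => absurd ⟨h1, h2⟩ h⟩
    choose e heΛ he using key
    set idx : τo.ToType → Ordinal := fun x => ((Ordinal.ToType.mk (o := τo)).symm x).val with hidx
    have hidxlt : ∀ x, idx x < τo := fun x => ((Ordinal.ToType.mk (o := τo)).symm x).prop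
    set step : Ordinal → Ordinal := fun γ => ⨆ x : τo.ToType, e (idx x) γ with hstepdef
    have hstepΛ : ∀ γ, step γ < Λ := fun γ =>
      Ordinal.iSup_lt_ord (by rwa [Cardinal.mk_toType]) (fun x => heΛ _ _)
    have hestep : ∀ i, i < τo → ∀ γ, e i γ ≤ step γ := by
      intro i hi γ
      have : e i γ = e (idx ((Ordinal.ToType.mk (o := τo)) ⟨i, hi⟩)) γ := by
        simp [hidx]
      rw [this]
      exact le_ciSup (Ordinal.bddAbove_range _) _
    set γseq : ℕ → Ordinal := fun n => step^[n] β with hγseq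
    have hsucc : ∀ n, γseq (n + 1) = step (γseq n) := fun n =>
      Function.iterate_succ_apply' step n β
    have hseqΛ : ∀ n, γseq n < Λ := by
      intro n
      induction n with
      | zero => exact hβ
      | succ n _ => rw [hsucc]; exact hstepΛ _
    have hmono : ∀ n, γseq n < γseq (n + 1) := by
      intro n
      rw [hsucc]
      exact lt_of_lt_of_le (he 0 (γseq n) hτo (hseqΛ n)).2 (hestep 0 hτo _)
    set L : Ordinal := ⨆ n, γseq n with hL
    have hLΛ : L < Λ := Ordinal.iSup_lt_ord (by rwa [Cardinal.mk_denumerable]) hseqΛ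
    have hγL : ∀ n, γseq n ≤ L := fun n => le_ciSup (Ordinal.bddAbove_range _) n
    have hβL : β ≤ L := hγL 0
    refine ⟨L, Set.mem_iInter₂.2 fun i hi => ?_, hβL⟩
    -- L ∈ E i
    set s : Set Ordinal := Set.range (fun n => e i (γseq n)) with hs
    have hsub : s ⊆ E i := by
      rintro a ⟨n, rfl⟩
      exact (he i (γseq n) hi (hseqΛ n)).1
    have hbdd : BddAbove s := Ordinal.bddAbove_range _
    have hsL : sSup s = L := by
      apply le_antisymm
      · apply csSup_le ⟨_, Set.mem_range_self 0⟩
        rintro a ⟨n, rfl⟩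
        calc e i (γseq n) ≤ step (γseq n) := hestep i hi _
          _ = γseq (n + 1) := (hsucc n).symm
          _ ≤ L := hγL (n + 1)
      · refine ciSup_le fun n => ?_
        exact le_of_lt (lt_of_lt_of_le (he i (γseq n) hi (hseqΛ n)).2
          (le_csSup hbdd (Set.mem_range_self n)))
    have := (hE i hi).2.2 s hsub ⟨_, Set.mem_range_self 0⟩ (by rw [hsL]; exact hLΛ)
    rwa [hsL] at this
  · -- closedness
    intro s hssub hsne hsΛ
    refine Set.mem_iInter₂.2 fun i hi => ?_
    exact (hE i hi).2.2 s (fun x hx => Set.mem_iInter₂.1 (hssub hx) i hi) hsne hsΛ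

/-- In the countable-cofinality setup, the club-guessing ideal
`id_p(C̄, Ī)` is `τ`-indecomposable for every uncountable regular `τ < μ` with `τ ≠ σ`. -/
theorem stmt_11 (μ σ : Cardinal)
    (hμ1 : ℵ₀ < μ) (hμ2 : μ.ord.cof = ℵ₀)
    (hσreg : σ.IsRegular) (hσ1 : ℵ₀ < σ) (hσ2 : σ < μ)
    (S : Set Ordinal)
    (hS1 : S ⊆ {δ | δ < (Order.succ μ).ord ∧ δ.cof = σ})
    (hS2 : StatIn S (Order.succ μ).ord)
    (C : Ordinal → Set Ordinal)
    (hC : ∀ δ ∈ S, ClubIn (C δ) δ) :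
    ∀ τ : Cardinal, τ.IsRegular → ℵ₀ < τ → τ < μ → τ ≠ σ →
      IndecIdeal (Order.succ μ) τ (idp μ S C) := by
  intro τ hτreg hτ1 hτ2 hτσ A hAsub hA
  by_contra hcon
  push_neg at hcon
  set Λ : Ordinal := (Order.succ μ).ord with hΛdef
  have hμ0 : ℵ₀ ≤ μ := hμ1.le
  have hsuccreg : (Order.succ μ).IsRegular := Cardinal.isRegular_succ hμ0
  have hcofΛ : Λ.cof = Order.succ μ := hsuccreg.cof_eq
  have hμsucc : μ < Order.succ μ := Order.lt_succ μ
  have hτord : Order.IsSuccLimit τ.ord := Cardinal.isSuccLimit_ord hτreg.aleph0_le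
  have hμnotreg : ¬ μ.IsRegular := by
    intro h
    rw [h.cof_eq] at hμ2
    exact absurd hμ2 hμ1.ne'
  -- partial unions are in the ideal
  set B : Ordinal → Set Ordinal := fun i => ⋃ j ∈ Iio (i + 1), A j with hBdef
  have hB : ∀ i < τ.ord, B i ∈ idp μ S C := by
    intro i hi
    apply hcon
    · intro j hj
      exact lt_trans hj (hτord.succ_lt hi)
    · rw [Ordinal.mk_Iio_ordinal]
      exact Cardinal.lift_lt.2 (Cardinal.lt_ord.1 (hτord.succ_lt hi))
  have hEex : ∀ i, ∃ Ei, i < τ.ord →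
      ClubIn Ei Λ ∧ ∀ δ ∈ S ∩ Ei, B i ∩ Ei ∩ C δ ∈ Idelta μ (C δ) δ := by
    intro i
    by_cases h : i < τ.ord
    · obtain ⟨-, E, hE1, hE2⟩ := hB i h
      exact ⟨E, fun _ => ⟨hE1, hE2⟩⟩
    · exact ⟨∅, fun h' => absurd h' h⟩
  choose E hE using hEex
  set Eall : Set Ordinal := ⋂ i ∈ Iio τ.ord, E i with hEalldef
  have hEallclub : ClubIn Eall Λ := by
    refine clubIn_iInter ?_ ?_ hτord.pos E (fun i hi => (hE i hi).1)
    · rw [Cardinal.card_ord, hcofΛ]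
      exact hτ2.trans hμsucc
    · rw [hcofΛ]
      exact hμ0.trans_lt hμsucc |>.trans_le le_rfl
  have hAub : (⋃ i ∈ Iio τ.ord, A i) ⊆ Iio Λ := Set.iUnion₂_subset hAsub
  have hnE : ¬ ∃ E0, ClubIn E0 Λ ∧ ∀ δ ∈ S ∩ E0,
      (⋃ i ∈ Iio τ.ord, A i) ∩ E0 ∩ C δ ∈ Idelta μ (C δ) δ := fun h => hA ⟨hAub, h⟩
  push_neg at hnE
  obtain ⟨δ, hδmem, hδbad⟩ := hnE Eall hEallclub
  obtain ⟨hδS, hδE⟩ := hδmem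
  obtain ⟨hδΛ, hδcof⟩ := hS1 hδS
  have hδlim : Order.IsSuccLimit δ := Ordinal.aleph0_le_cof.1 (by rw [hδcof]; exact hσ1.le)
  -- witnesses for each i
  have hwit : ∀ i, ∃ (a : Cardinal) (b : Ordinal), i < τ.ord → a < μ ∧ b < δ ∧
      B i ∩ E i ∩ C δ ⊆ {γ ∈ C δ | γ ∈ accs (C δ) ∨ γ.cof < a ∨ γ < b} := by
    intro i
    by_cases h : i < τ.ord
    · obtain ⟨-, a, ha, b, hb, hsub⟩ := (hE i h).2 δ ⟨hδS, Set.mem_iInter₂.1 hδE i h⟩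
      exact ⟨a, b, fun _ => ⟨ha, hb, hsub⟩⟩
    · exact ⟨0, 0, fun h' => absurd h' h⟩
  choose av bv hab using hwit
  -- pigeonhole for the cardinal bounds
  obtain ⟨ι₁, f₁, hf₁, hι₁⟩ := Ordinal.exists_lsub_cof μ.ord
  rw [hμ2] at hι₁
  have hcov1 : ∀ j ∈ Iio τ.ord, ∃ x : ι₁, j ∈ {j' | (av j').ord ≤ f₁ x} := by
    intro j hj
    have : (av j).ord < Ordinal.lsub f₁ := by
      rw [hf₁]
      exact Cardinal.ord_lt_ord.2 (hab j hj).1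
    exact Ordinal.lt_lsub_iff.1 this
  obtain ⟨x₁, hU1⟩ := unb_of_cover hτreg (by rw [hι₁]; exact hτ1)
    (fun x => {j' | (av j').ord ≤ f₁ x}) (Iio τ.ord) (fun _ h => h)
    (fun β hβ => ⟨β, hβ, le_rfl⟩) hcov1
  -- pigeonhole / boundedness for the ordinal bounds
  have key : ∃ (b' : Ordinal) (W : Set Ordinal), b' < δ ∧
      (∀ β < τ.ord, ∃ j ∈ W, β ≤ j) ∧
      ∀ j ∈ W, j < τ.ord ∧ (av j).ord ≤ f₁ x₁ ∧ bv j ≤ b' := by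
    rcases lt_or_gt_of_ne hτσ with hlt | hgt
    · -- τ < σ : all the bv's are bounded below δ
      set g : τ.ord.ToType → Ordinal :=
        fun x => bv ((Ordinal.ToType.mk (o := τ.ord)).symm x).val with hg
      have hgδ : ∀ x, g x < δ := fun x =>
        (hab _ ((Ordinal.ToType.mk (o := τ.ord)).symm x).prop).2.1
      have hb'δ : (⨆ x, g x) < δ := by
        refine Ordinal.iSup_lt_ord ?_ hgδ
        rw [Cardinal.mk_toType, Cardinal.card_ord, hδcof]
        exact hlt
      refine ⟨⨆ x, g x, {j | (av j).ord ≤ f₁ x₁} ∩ Iio τ.ord, hb'δ, hU1, ?_⟩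
      rintro j ⟨hj1, hj2⟩
      refine ⟨hj2, hj1, ?_⟩
      have : bv j = g ((Ordinal.ToType.mk (o := τ.ord)) ⟨j, hj2⟩) := by simp [hg]
      rw [this]
      exact le_ciSup (Ordinal.bddAbove_range _) _
    · -- σ < τ : pigeonhole over a cofinal family in δ
      obtain ⟨ι₂, f₂, hf₂, hι₂⟩ := Ordinal.exists_lsub_cof δ
      rw [hδcof] at hι₂
      have hcov2 : ∀ j ∈ {j' | (av j').ord ≤ f₁ x₁} ∩ Iio τ.ord,
          ∃ x : ι₂, j ∈ {j' | bv j' ≤ f₂ x} := by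
        rintro j ⟨-, hj⟩
        have : bv j < Ordinal.lsub f₂ := by rw [hf₂]; exact (hab j hj).2.1
        exact Ordinal.lt_lsub_iff.1 this
      obtain ⟨x₂, hU2⟩ := unb_of_cover hτreg (by rw [hι₂]; exact hgt)
        (fun x => {j' | bv j' ≤ f₂ x}) ({j | (av j).ord ≤ f₁ x₁} ∩ Iio τ.ord)
        (fun _ h => h.2) hU1 hcov2
      refine ⟨f₂ x₂, {j' | bv j' ≤ f₂ x₂} ∩ ({j | (av j).ord ≤ f₁ x₁} ∩ Iio τ.ord),
        by rw [← hf₂]; exact Ordinal.lt_lsub f₂ x₂, hU2, ?_⟩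
      rintro j ⟨hj1, hj2, hj3⟩
      exact ⟨hj3, hj2, hj1⟩
  obtain ⟨b', W, hb'δ, hWunb, hWprop⟩ := key
  -- the combined cardinal bound
  have hf₁μ : (f₁ x₁).card < μ := by
    have : f₁ x₁ < μ.ord := by rw [← hf₁]; exact Ordinal.lt_lsub f₁ x₁
    exact Cardinal.lt_ord.1 this
  set astar : Cardinal := Order.succ ((f₁ x₁).card ⊔ ℵ₀) with hastar
  have hmaxμ : (f₁ x₁).card ⊔ ℵ₀ < μ := max_lt hf₁μ hμ1
  have hastarμ : astar < μ := by
    rcases lt_or_eq_of_le (Order.succ_le_of_lt hmaxμ) with h | h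
    · exact h
    · exact absurd (h ▸ Cardinal.isRegular_succ (le_max_right _ _)) hμnotreg
  -- contradiction: the union is small at δ
  apply hδbad
  refine ⟨fun x hx => hx.2, astar, hastarμ, Order.succ b', hδlim.succ_lt hb'δ, ?_⟩
  rintro γ ⟨⟨hγA, hγE⟩, hγC⟩
  obtain ⟨j0, hj0, hγj0⟩ := Set.mem_iUnion₂.1 hγA
  obtain ⟨j, hjW, hj0j⟩ := hWunb j0 hj0
  obtain ⟨hjτ, hjav, hjbv⟩ := hWprop j hjW
  have hγBj : γ ∈ B j := Set.mem_iUnion₂.2 ⟨j0, lt_of_le_of_lt hj0j (lt_add_one j), hγj0⟩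
  have hγEj : γ ∈ E j := Set.mem_iInter₂.1 hγE j hjτ
  have := (hab j hjτ).2.2 ⟨⟨hγBj, hγEj⟩, hγC⟩
  obtain ⟨hγC', hdisj⟩ := this
  refine ⟨hγC', ?_⟩
  rcases hdisj with h | h | h
  · exact Or.inl h
  · refine Or.inr (Or.inl ?_)
    have hav : av j ≤ (f₁ x₁).card := by
      have := Ordinal.card_le_card hjav
      rwa [Cardinal.card_ord] at this
    calc γ.cof < av j := h
      _ ≤ (f₁ x₁).card ⊔ ℵ₀ := hav.trans (le_max_left _ _)
      _ < astar := Order.lt_succ _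
  · refine Or.inr (Or.inr ?_)
    calc γ < bv j := h
      _ ≤ b' := hjbv
      _ < Order.succ b' := Order.lt_succ _
end

section
/- Let μ be a singular cardinal of cofinality ℵ₀, let ⟨μ_n : n < ω⟩ be a strictly increasing sequence of regular cardinals cofinal in μ, and let ⟨f_α : α < μ⁺⟩ be a scale on ⟨μ_n : n < ω⟩. Then there is a club C ⊆ μ⁺ such that every β ∈ C satisfies: for all but finitely many n < ω, for every η < μ_n and every ν < μ_{n+1}, the set of α < β with f_α(n) > η and f_α(n+1) > ν is unbounded in β. -/
set_option autoImplicit false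

open Cardinal Set Ordinal

/-- Existence of a club of "good" points for a scale (Lemma 7.3). -/
theorem stmt_12 (μ : Cardinal) (hμ1 : ℵ₀ < μ) (hμ2 : μ.ord.cof = ℵ₀)
    (μs : ℕ → Cardinal)
    (hμs1 : ∀ n, (μs n).IsRegular) (hμs2 : StrictMono μs)
    (hμs3 : ∀ n, μs n < μ) (hμs4 : ∀ ν, ν < μ → ∃ n, ν ≤ μs n)
    (f : Ordinal → ℕ → Ordinal) (hf : IsScale (Order.succ μ) μs f) :
    ∃ C, ClubIn C (Order.succ μ).ord ∧
      ∀ β ∈ C, ∃ N : ℕ, ∀ n ≥ N,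
        ∀ η, η < (μs n).ord → ∀ ν, ν < (μs (n+1)).ord →
          ∀ β', β' < β → ∃ α, β' ≤ α ∧ α < β ∧ η < f α n ∧ ν < f α (n+1) := by
  classical
  set lam := Order.succ μ with hlam
  set L := lam.ord with hL
  have hμlt : μ < lam := Order.lt_succ μ
  have hℵlam : ℵ₀ < lam := hμ1.trans hμlt
  have hreg : lam.IsRegular := Cardinal.isRegular_succ hμ1.le
  have hcof : L.cof = lam := hreg.cof_eq
  have hmuslt : ∀ n, μs n < lam := fun n => (hμs3 n).trans hμlt
  have hLlim : Order.IsSuccLimit L := Cardinal.isSuccLimit_ord hℵlam.le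
  have hsucc : ∀ y : Ordinal, y < y + 1 := fun y => by
    rw [Ordinal.add_one_eq_succ]; exact Order.lt_succ y
  have hL0 : (0 : Ordinal) < L := hLlim.pos
  obtain ⟨hf1, hf2, hf3⟩ := hf
  -- Key lemma: eventually, pairs of coordinates can be exceeded unboundedly in L.
  have key : ∃ N : ℕ, ∀ n, N ≤ n → ∀ η, η < (μs n).ord → ∀ ν, ν < (μs (n+1)).ord →
      ∀ β', β' < L → ∃ α, β' ≤ α ∧ α < L ∧ η < f α n ∧ ν < f α (n+1) := by
    by_contra hcon
    push_neg at hcon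
    set Bad : ℕ → Prop := fun n => ∃ η, η < (μs n).ord ∧ ∃ ν, ν < (μs (n+1)).ord ∧
      ∃ β', β' < L ∧ ∀ α, β' ≤ α → α < L → η < f α n → f α (n+1) ≤ ν with hBad
    have hBadInf : ∀ N, ∃ n, N ≤ n ∧ Bad n := by
      intro N
      obtain ⟨n, hn, η, hη, ν, hν, β', hβ', hb⟩ := hcon N
      exact ⟨n, hn, η, hη, ν, hν, β', hβ', hb⟩
    have hW : ∀ n, ∃ η ν β', Bad n → (η < (μs n).ord ∧ ν < (μs (n+1)).ord ∧ β' < L ∧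
        ∀ α, β' ≤ α → α < L → η < f α n → f α (n+1) ≤ ν) := by
      intro n
      by_cases h : Bad n
      · obtain ⟨η, hη, ν, hν, β', hβ', hb⟩ := h
        exact ⟨η, ν, β', fun _ => ⟨hη, hν, hβ', hb⟩⟩
      · exact ⟨0, 0, 0, fun hb => absurd hb h⟩
    choose ηf νf γf hWf using hW
    have hord0 : ∀ m, (0 : Ordinal) < (μs m).ord :=
      fun m => Cardinal.lt_ord.mpr (by simpa using (hμs1 m).pos)
    set g : ℕ → Ordinal := fun m =>
      max (if Bad m then ηf m else 0)
        (match m with | 0 => 0 | Nat.succ k => if Bad k then νf k else 0) with hgdef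
    have hg : ∀ m, g m < (μs m).ord := by
      intro m
      apply max_lt
      · split_ifs with h
        · exact (hWf m h).1
        · exact hord0 m
      · rcases m with _ | k
        · exact hord0 0
        · dsimp only
          split_ifs with h
          · exact (hWf k h).2.1
          · exact hord0 (k+1)
    obtain ⟨αs, hαsL, N1, hdom⟩ := hf3 g hg
    set γsup : Ordinal := ⨆ n : ℕ, (if Bad n then γf n else 0) with hγdef
    have hγsup : γsup < L := by
      apply Ordinal.iSup_lt_ord
      · rw [hcof, Cardinal.mk_nat]; exact hℵlam
      · intro n
        split_ifs with h
        · exact (hWf n h).2.2.1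
        · exact hL0
    set α' : Ordinal := max αs γsup + 1 with hα'def
    have hα'L : α' < L := by
      have := hLlim.succ_lt (max_lt hαsL hγsup)
      rwa [← Ordinal.add_one_eq_succ] at this
    obtain ⟨N2, hN2⟩ := hf2 αs α'
      ((le_max_left αs γsup).trans_lt (hsucc _)) hα'L
    obtain ⟨n, hnN, hBn⟩ := hBadInf (max N1 N2)
    obtain ⟨hη, hν, hγL, hb⟩ := hWf n hBn
    have hn1 : N1 ≤ n := (le_max_left N1 N2).trans hnN
    have hn2 : N2 ≤ n := (le_max_right N1 N2).trans hnN
    have h1 : ηf n < f α' n := by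
      have e1 : ηf n ≤ g n := by
        rw [hgdef]; dsimp only
        rw [if_pos hBn]; exact le_max_left _ _
      exact lt_trans (e1.trans_lt (hdom n hn1)) (hN2 n hn2)
    have h2 : νf n < f α' (n+1) := by
      have e1 : νf n ≤ g (n+1) := by
        rw [hgdef]; dsimp only
        rw [if_pos hBn]; exact le_max_right _ _
      exact lt_trans (e1.trans_lt (hdom (n+1) (hn1.trans (Nat.le_succ n))))
        (hN2 (n+1) (hn2.trans (Nat.le_succ n)))
    have h3 : γf n ≤ α' := by
      have e1 : γf n ≤ γsup := by
        have := Ordinal.le_iSup (fun n => if Bad n then γf n else 0) n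
        rwa [if_pos hBn] at this
      exact (e1.trans (le_max_right αs γsup)).trans (hsucc _).le
    exact absurd (hb α' h3 hα'L h1) (not_le.mpr h2)
  obtain ⟨N₀, hN₀⟩ := key
  -- choice function
  have hA : ∀ (β' : Ordinal) (n : ℕ) (η ν : Ordinal), ∃ α, α < L ∧
      ((N₀ ≤ n ∧ η < (μs n).ord ∧ ν < (μs (n+1)).ord ∧ β' < L) →
        (β' ≤ α ∧ η < f α n ∧ ν < f α (n+1))) := by
    intro β' n η ν
    by_cases h : N₀ ≤ n ∧ η < (μs n).ord ∧ ν < (μs (n+1)).ord ∧ β' < L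
    · obtain ⟨α, h1, h2, h3, h4⟩ := hN₀ n h.1 η h.2.1 ν h.2.2.1 β' h.2.2.2
      exact ⟨α, h2, fun _ => ⟨h1, h3, h4⟩⟩
    · exact ⟨0, hL0, fun hc => absurd hc h⟩
  choose A hAL hAp using hA
  set K : ℕ → Ordinal → Ordinal := fun n β' =>
    Ordinal.blsub (μs n).ord (fun η _ =>
      Ordinal.blsub (μs (n+1)).ord (fun ν _ => A β' n η ν)) with hKdef
  have hKlt : ∀ n β', K n β' < L := by
    intro n β'
    apply Ordinal.blsub_lt_ord
    · rw [Cardinal.card_ord, hcof]; exact hmuslt n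
    · intro η _
      apply Ordinal.blsub_lt_ord
      · rw [Cardinal.card_ord, hcof]; exact hmuslt (n+1)
      · intro ν _; exact hAL β' n η ν
  set G : Ordinal → Ordinal := fun β' => ⨆ n : ℕ, K n β' with hGdef
  have hGlt : ∀ β', G β' < L := by
    intro β'
    apply Ordinal.iSup_lt_ord
    · rw [hcof, Cardinal.mk_nat]; exact hℵlam
    · intro n; exact hKlt n β'
  set Hf : Ordinal → Ordinal := fun x =>
    max (Ordinal.blsub (x+1) (fun β' _ => G β')) (x+1) with hHdef
  have hHlt : ∀ x, x < L → Hf x < L := by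
    intro x hx
    apply max_lt
    · apply Ordinal.blsub_lt_ord
      · rw [hcof, Ordinal.add_one_eq_succ, Ordinal.card_succ]
        exact Cardinal.add_lt_of_lt hℵlam.le (Cardinal.lt_ord.mp hx)
          (lt_trans Cardinal.one_lt_aleph0 hℵlam)
      · intro β' _; exact hGlt β'
    · have := hLlim.succ_lt hx
      rwa [← Ordinal.add_one_eq_succ] at this
  have hHkey : ∀ x, x < L → ∀ β', β' ≤ x → ∀ n, N₀ ≤ n → ∀ η, η < (μs n).ord →
      ∀ ν, ν < (μs (n+1)).ord →
      ∃ α, β' ≤ α ∧ α < Hf x ∧ η < f α n ∧ ν < f α (n+1) := by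
    intro x hx β' hβ'x n hn η hη ν hν
    obtain ⟨p1, p2, p3⟩ := hAp β' n η ν ⟨hn, hη, hν, hβ'x.trans_lt hx⟩
    refine ⟨A β' n η ν, p1, ?_, p2, p3⟩
    have c1 : A β' n η ν < Ordinal.blsub (μs (n+1)).ord (fun ν _ => A β' n η ν) :=
      Ordinal.lt_blsub _ ν hν
    have c2 : Ordinal.blsub (μs (n+1)).ord (fun ν _ => A β' n η ν) < K n β' :=
      Ordinal.lt_blsub (fun η _ => Ordinal.blsub (μs (n+1)).ord (fun ν _ => A β' n η ν)) η hη
    have c3 : K n β' ≤ G β' := Ordinal.le_iSup (fun n => K n β') n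
    have c4 : G β' < Ordinal.blsub (x+1) (fun β' _ => G β') :=
      Ordinal.lt_blsub (fun β' _ => G β') β' (hβ'x.trans_lt (hsucc x))
    calc A β' n η ν < K n β' := c1.trans c2
      _ ≤ G β' := c3
      _ < Ordinal.blsub (x+1) (fun β' _ => G β') := c4
      _ ≤ Hf x := le_max_left _ _
  have hxHf : ∀ x, x < Hf x := fun x => (hsucc x).trans_le (le_max_right _ _)
  set C : Set Ordinal := {β | β < L ∧ ∀ n, N₀ ≤ n → ∀ η, η < (μs n).ord →
    ∀ ν, ν < (μs (n+1)).ord → ∀ β', β' < β →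
      ∃ α, β' ≤ α ∧ α < β ∧ η < f α n ∧ ν < f α (n+1)} with hCdef
  -- unboundedness construction
  have hCunbdd : ∀ β₀, β₀ < L → ∃ β ∈ C, β₀ ≤ β := by
    intro β₀ hβ₀
    set gs : ℕ → Ordinal := fun k => Nat.rec β₀ (fun _ ih => Hf ih) k with hgs
    have hgsL : ∀ k, gs k < L := by
      intro k; induction k with
      | zero => exact hβ₀
      | succ k ih => exact hHlt _ ih
    set β : Ordinal := ⨆ k, gs k with hβdef
    have hβL : β < L := by
      apply Ordinal.iSup_lt_ord
      · rw [hcof, Cardinal.mk_nat]; exact hℵlam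
      · exact hgsL
    refine ⟨β, ⟨hβL, ?_⟩, Ordinal.le_iSup gs 0⟩
    intro n hn η hη ν hν β' hβ'
    obtain ⟨k, hk⟩ := Ordinal.lt_iSup_iff.mp hβ'
    obtain ⟨α, h1, h2, h3, h4⟩ := hHkey (gs k) (hgsL k) β' hk.le n hn η hη ν hν
    exact ⟨α, h1, h2.trans_le (Ordinal.le_iSup gs (k+1)), h3, h4⟩
  refine ⟨C, ⟨fun β hβ => hβ.1, ?_, ?_⟩, ?_⟩
  · intro β₀ hβ₀
    obtain ⟨β, hβC, hle⟩ := hCunbdd β₀ hβ₀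
    exact ⟨β, hβC, hle⟩
  · intro s hsC hsne hsup
    have hbdd : BddAbove s := ⟨L, fun c hc => (hsC hc).1.le⟩
    refine ⟨hsup, ?_⟩
    intro n hn η hη ν hν β' hβ'
    obtain ⟨c, hcs, hβ'c⟩ := exists_lt_of_lt_csSup hsne hβ'
    obtain ⟨α, h1, h2, h3, h4⟩ := (hsC hcs).2 n hn η hη ν hν β' hβ'c
    exact ⟨α, h1, h2.trans_le (le_csSup hbdd hcs), h3, h4⟩
  · intro β hβ
    exact ⟨N₀, fun n hn η hη ν hν β' hβ' => hβ.2 n hn η hη ν hν β' hβ'⟩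
end
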